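/- arXiv:0707.4124 — 6 statements merged into one kernel-verified Lean document; each statement's English description precedes it below -/
import Mathlib

section
/- Let α, β > 0 and let X and Y be independent random variables with X distributed as Exp(α) and Y distributed as Exp(β). Then the conditional law of X given the event {X ≥ Y} equals Exp(α+β) ⋆ Exp(α), the convolution of an exponential distribution of parameter α+β with an exponential distribution of parameter α. -/
/-!
Conditioning on `{Y ≤ X}` multiplies the density `α e^{-αx}` of `X` by `P(Y ≤ x) = 1 - e^{-βx}`.
Up to the factor `P(Y ≤ X) = β / (α + β)` this is `α(α+β)/β · (e^{-αx} - e^{-(α+β)x})`, the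
density of `Exp(α+β) ⋆ Exp(α)`: the convolution integrand `(α+β) e^{-(α+β)y} · α e^{-α(x-y)}` is
`α(α+β)/β · e^{-αx}` times the density `β e^{-βy}` of `Y`, restricted to `y ≤ x`.
-/

open MeasureTheory ProbabilityTheory Set Real
open scoped ENNReal

lemma map_cond_eq_of_map_restrict_eq_smul {Ω E : Type*} [MeasurableSpace Ω] [MeasurableSpace E]
    {P : Measure Ω} [IsFiniteMeasure P] {X : Ω → E} (hX : Measurable X) {A : Set Ω}
    {ν : Measure E} [IsProbabilityMeasure ν] {c : ℝ≥0∞} (hc : c ≠ 0)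
    (h : (P.restrict A).map X = c • ν) :
    (P[|A]).map X = ν := by
  have hPA : P A = c := by
    simpa [Measure.map_apply hX MeasurableSet.univ] using congr($h univ)
  rw [ProbabilityTheory.cond, Measure.map_smul, h, hPA, smul_smul,
    ENNReal.inv_mul_cancel hc (hPA ▸ measure_ne_top P A), one_smul]

lemma map_restrict_le_eq_withDensity {Ω : Type*} [MeasurableSpace Ω] {P : Measure Ω}
    [IsFiniteMeasure P] {X Y : Ω → ℝ} (hX : Measurable X) (hY : Measurable Y)
    (hXY : IndepFun X Y P) :
    (P.restrict {ω | Y ω ≤ X ω}).map X = (P.map X).withDensity fun x ↦ P.map Y (Iic x) := by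
  ext s hs
  have hS : MeasurableSet {p : ℝ × ℝ | p.1 ∈ s ∧ p.2 ≤ p.1} :=
    (measurable_fst hs).inter (measurableSet_le measurable_snd measurable_fst)
  have hpre : X ⁻¹' s ∩ {ω | Y ω ≤ X ω} = (fun ω ↦ (X ω, Y ω)) ⁻¹' {p | p.1 ∈ s ∧ p.2 ≤ p.1} :=
    rfl
  rw [Measure.map_apply hX hs, Measure.restrict_apply (hX hs), withDensity_apply _ hs, hpre,
    ← Measure.map_apply (hX.prodMk hY) hS,
    (indepFun_iff_map_prod_eq_prod_map_map hX.aemeasurable hY.aemeasurable).1 hXY,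
    Measure.prod_apply hS, ← lintegral_indicator hs]
  congr with x
  by_cases hx : x ∈ s <;> simp [hx, preimage, Iic]

lemma expMeasure_eq_withDensity (r : ℝ) :
    expMeasure r = volume.withDensity (exponentialPDF r) := rfl

lemma expMeasure_Iic_of_neg {r x : ℝ} (hx : x < 0) : expMeasure r (Iic x) = 0 := by
  rw [expMeasure_eq_withDensity, withDensity_apply _ measurableSet_Iic]
  exact setLIntegral_eq_zero measurableSet_Iic fun y (hy : y ≤ x) ↦
    exponentialPDF_of_neg (hy.trans_lt hx)

lemma measurable_exponentialPDF (r : ℝ) : Measurable (exponentialPDF r) :=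
  (measurable_exponentialPDFReal r).ennreal_ofReal

lemma exponentialPDF_add_mul_exponentialPDF {α β : ℝ} (hα : 0 < α) (hβ : 0 < β) (x y : ℝ) :
    exponentialPDF (α + β) y * exponentialPDF α (-y + x) =
      ENNReal.ofReal (α * (α + β) / β * rexp (-(α * x))) *
        (Iic x).indicator (exponentialPDF β) y := by
  rcases lt_or_ge y 0 with hy | hy
  · simp [exponentialPDF_of_neg hy, indicator_apply]
  rcases lt_or_ge x y with hxy | hyx
  · rw [indicator_of_notMem (notMem_Iic.2 hxy), exponentialPDF_of_neg (x := -y + x) (by linarith),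
      mul_zero, mul_zero]
  rw [indicator_of_mem (mem_Iic.2 hyx), exponentialPDF_of_nonneg hy,
    exponentialPDF_of_nonneg (by linarith), exponentialPDF_of_nonneg hy,
    ← ENNReal.ofReal_mul (by positivity), ← ENNReal.ofReal_mul (by positivity)]
  have hexp : rexp (-((α + β) * y)) * rexp (-(α * (-y + x))) =
      rexp (-(α * x)) * rexp (-(β * y)) := by
    rw [← exp_add, ← exp_add]; ring_nf
  congr 1
  calc _ = α * (α + β) * (rexp (-((α + β) * y)) * rexp (-(α * (-y + x)))) := by ring
    _ = _ := by rw [hexp]; field_simp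

lemma lconvolution_exponentialPDF_add {α β : ℝ} (hα : 0 < α) (hβ : 0 < β) (x : ℝ) :
    (exponentialPDF (α + β) ⋆ₗ exponentialPDF α) x =
      ENNReal.ofReal (α * (α + β) / β * rexp (-(α * x))) * expMeasure β (Iic x) := by
  rw [lconvolution_def, lintegral_congr (exponentialPDF_add_mul_exponentialPDF hα hβ x),
    lintegral_const_mul _ ((measurable_exponentialPDF β).indicator measurableSet_Iic),
    lintegral_indicator measurableSet_Iic, expMeasure_eq_withDensity,
    withDensity_apply _ measurableSet_Iic]

lemma exponentialPDF_mul_expMeasure_Iic {α β : ℝ} (hα : 0 < α) (hβ : 0 < β) (x : ℝ) :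
    exponentialPDF α x * expMeasure β (Iic x) =
      ENNReal.ofReal (β / (α + β)) * (exponentialPDF (α + β) ⋆ₗ exponentialPDF α) x := by
  rw [lconvolution_exponentialPDF_add hα hβ, ← mul_assoc, ← ENNReal.ofReal_mul (by positivity)]
  rcases lt_or_ge x 0 with hx | hx
  · rw [expMeasure_Iic_of_neg hx, mul_zero, mul_zero]
  · rw [exponentialPDF_of_nonneg hx]
    congr 2
    field_simp

lemma withDensity_expMeasure_Iic {α β : ℝ} (hα : 0 < α) (hβ : 0 < β) :
    (expMeasure α).withDensity (fun x ↦ expMeasure β (Iic x)) =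
      ENNReal.ofReal (β / (α + β)) • (expMeasure (α + β) ∗ expMeasure α) := by
  have hF : Measurable fun x ↦ expMeasure β (Iic x) :=
    Monotone.measurable fun _ _ h ↦ measure_mono (Iic_subset_Iic.2 h)
  rw [expMeasure_eq_withDensity α, expMeasure_eq_withDensity (α + β),
    ← withDensity_mul _ (measurable_exponentialPDF α) hF,
    conv_withDensity_eq_lconvolution (measurable_exponentialPDF _) (measurable_exponentialPDF α),
    ← withDensity_smul _ (measurable_lconvolution _ (measurable_exponentialPDF _)
      (measurable_exponentialPDF α))]
  congr 1 with x
  exact exponentialPDF_mul_expMeasure_Iic hα hβ x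

/-- If `X ~ Exp α` and `Y ~ Exp β` are independent, then the conditional law
of `X` given `{X ≥ Y}` is `Exp(α+β) ⋆ Exp(α)`. -/
theorem condLaw_given_ge_eq_conv
    {Ω : Type*} [MeasurableSpace Ω] (P : Measure Ω) [IsProbabilityMeasure P]
    (α β : ℝ) (hα : 0 < α) (hβ : 0 < β)
    (X Y : Ω → ℝ) (hX : Measurable X) (hY : Measurable Y)
    (hindep : IndepFun X Y P)
    (hXlaw : P.map X = expMeasure α) (hYlaw : P.map Y = expMeasure β) :
    (P[|{ω | Y ω ≤ X ω}]).map X = (expMeasure (α + β)).conv (expMeasure α) := by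
  have := isProbabilityMeasure_expMeasure hα
  have := isProbabilityMeasure_expMeasure (add_pos hα hβ)
  refine map_cond_eq_of_map_restrict_eq_smul hX
    (c := ENNReal.ofReal (β / (α + β))) (ENNReal.ofReal_pos.2 (by positivity)).ne' ?_
  rw [map_restrict_le_eq_withDensity hX hY hindep, hXlaw, hYlaw, withDensity_expMeasure_Iic hα hβ]
end

section
/- For every integer n ≥ 0, P(Δ_n) = C_n · λ^n · μ^{n+1} / (λ+μ)^{2n+1}; that is, the probability that a busy period of the M/M/1 queue consists of exactly n+1 customers equals C_n λ^n μ^{n+1} / (λ+μ)^{2n+1}. -/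
/-!
By memorylessness, the work left just after the `n`-th arrival of a busy period that is still
running consists of one `Exp(μ)` phase per customer present. Hence on the survival event `A_n`
the workload `D_n` has the defective density `∑ₘ pⁿ q^(n-m) B(n,m) · Erlang(m+1, μ)`, where
`p = λ/(λ+μ)`, `q = μ/(λ+μ)` and `B(n,m)` counts the queue-length paths that never empty. The
induction step rests on two computations: an `Exp(λ)` clock started while `m + 1` phases remain
rings after exactly `m - r` of them are completed with probability `p q^(m-r)`; and adding a
fresh service time turns `Erlang(r+1)` into `Erlang(r+2)`. Finally `Δ_n = A_n ∩ {τ_n ≥ D_n}`, with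
`P(τ_n ≥ x) = e^{-λx}` and `∫ Erlang(m+1, μ)(x) e^{-λx} dx = q^(m+1)`, so
`P(Δ_n) = pⁿ q^(n+1) ∑ₘ B(n,m)`, and `∑ₘ B(n,m) = C_n` by the hockey-stick identity.
-/

open MeasureTheory ProbabilityTheory

/-- The event that the busy period initiated by customer 0 contains exactly `n+1` customers:
the `i`-th partial sum of inter-arrival times is smaller than the `i`-th partial sum of service
times for `i = 0, …, n-1`, and the `n`-th partial sum of inter-arrival times is at least the
`n`-th partial sum of service times. -/
def busyDelta {Ω : Type*} (τ σ : ℕ → Ω → ℝ) (n : ℕ) : Set Ω :=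
  {ω | (∀ i < n, ∑ j ∈ Finset.range (i + 1), τ j ω < ∑ j ∈ Finset.range (i + 1), σ j ω) ∧
       ∑ j ∈ Finset.range (n + 1), σ j ω ≤ ∑ j ∈ Finset.range (n + 1), τ j ω}

section Ballot

open Finset

/-- The number of queue-length paths of a busy period that hold `m + 1` customers just after
the `n`-th arrival following customer 0: `n` arrivals and `n - m` departures, interleaved so
that the queue never empties. -/
def ballot : ℕ → ℕ → ℕ
  | 0, m => if m = 0 then 1 else 0
  | _ + 1, 0 => 0
  | n + 1, m + 1 => ∑ k ∈ Icc m n, ballot n k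

lemma sum_range_add_choose_succ (n j : ℕ) :
    ∑ i ∈ range (j + 1), (n + i).choose (n + 1) = (n + j + 1).choose (n + 2) := by
  induction j with
  | zero => simp
  | succ j ih =>
    rw [sum_range_succ, ih, add_comm]
    exact (Nat.choose_succ_succ' (n + j + 1) (n + 1)).symm

lemma ballot_succ_sub_eq (n : ℕ) : ∀ j ≤ n + 1,
    (ballot (n + 1) (n + 1 - j) : ℤ) = (n + j).choose n - (n + j).choose (n + 1) := by
  induction n with
  | zero =>
    intro j hj
    interval_cases j <;> simp [ballot]
  | succ n ih =>
    intro j hj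
    rcases hj.lt_or_eq with hj | rfl
    · have hreflect : ∑ i ∈ range (j + 1), ballot (n + 1) (n + 1 - i)
          = ∑ k ∈ Icc (n + 1 - j) (n + 1), ballot (n + 1) k := by
        rw [range_eq_Ico, sum_Ico_reflect _ _ (by omega), Nat.sub_zero,
          ← Ico_add_one_right_eq_Icc]
        congr 2; omega
      have hchoose := Nat.sum_range_add_choose j n
      simp only [add_comm _ n] at hchoose
      rw [show n + 1 + 1 - j = (n + 1 - j) + 1 by omega, ballot, ← hreflect, Nat.cast_sum,
        sum_congr rfl fun i hi => ih i (by simp at hi; omega), sum_sub_distrib,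
        ← Nat.cast_sum, ← Nat.cast_sum, hchoose, sum_range_add_choose_succ]
      ring_nf
    · rw [Nat.sub_self, ballot, Nat.cast_zero,
        show n + 1 + (n + 1 + 1) = 2 * (n + 1) + 1 by ring, ← Nat.choose_symm_half]
      simp

theorem catalan_eq_choose_sub_choose (n : ℕ) :
    (catalan n : ℤ) = (2 * n).choose n - (2 * n).choose (n + 1) := by
  have hcat : ((n + 1 : ℕ) : ℤ) * catalan n = (2 * n).choose n := by
    rw [← Nat.centralBinom_eq_two_mul_choose, ← succ_mul_catalan_eq_centralBinom]
    push_cast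
    ring
  have hsucc : ((2 * n).choose (n + 1) : ℤ) * (n + 1) = (2 * n).choose n * n := by
    have := Nat.choose_succ_right_eq (2 * n) n
    rw [show 2 * n - n = n by omega] at this
    exact_mod_cast this
  apply mul_left_cancel₀ (show ((n + 1 : ℕ) : ℤ) ≠ 0 by positivity)
  push_cast at hcat ⊢
  linear_combination hcat + hsucc

theorem sum_ballot (n : ℕ) : ∑ m ∈ range (n + 1), ballot n m = catalan n := by
  have h := ballot_succ_sub_eq n n le_self_add
  rw [show n + 1 - n = 0 + 1 by omega, ← two_mul, ← catalan_eq_choose_sub_choose, ballot,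
    ← Nat.range_succ_eq_Icc_zero] at h
  exact_mod_cast h

theorem sum_ballot_mul_sum {R : Type*} [CommSemiring R] (p q : R) (I : ℕ → R) (n : ℕ) :
    ∑ m ∈ range (n + 1), p ^ n * q ^ (n - m) * ballot n m
        * ∑ r ∈ range (m + 1), p * q ^ (m - r) * I (r + 1)
      = ∑ m ∈ range (n + 2), p ^ (n + 1) * q ^ (n + 1 - m) * ballot (n + 1) m * I m := by
  calc _ = ∑ m ∈ range (n + 1), ∑ r ∈ range (m + 1),
          p ^ (n + 1) * q ^ (n - r) * ballot n m * I (r + 1) := by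
        refine sum_congr rfl fun m hm => ?_
        rw [mul_sum]
        refine sum_congr rfl fun r hr => ?_
        have hq : q ^ (n - r) = q ^ (n - m) * q ^ (m - r) := by
          rw [← pow_add]; congr 1; simp at hm hr; omega
        rw [hq]
        ring
    _ = ∑ r ∈ range (n + 1), ∑ m ∈ Icc r n,
          p ^ (n + 1) * q ^ (n - r) * ballot n m * I (r + 1) :=
        sum_comm' fun m r => by simp only [mem_range, mem_Icc]; omega
    _ = ∑ r ∈ range (n + 1),
          p ^ (n + 1) * q ^ (n + 1 - (r + 1)) * ballot (n + 1) (r + 1) * I (r + 1) := by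
        refine sum_congr rfl fun r _ => ?_
        simp only [ballot, Nat.cast_sum, ← sum_mul, ← mul_sum, Nat.add_sub_add_right]
    _ = _ := by simp [sum_range_succ' _ (n + 1), ballot]

theorem sum_pow_mul_ballot_mul_pow {R : Type*} [CommSemiring R] (p q : R) (n : ℕ) :
    ∑ m ∈ range (n + 1), p ^ n * q ^ (n - m) * ballot n m * q ^ (m + 1)
      = p ^ n * q ^ (n + 1) * catalan n := by
  rw [← sum_ballot, Nat.cast_sum, mul_sum]
  refine sum_congr rfl fun m hm => ?_
  rw [show n + 1 = (n - m) + (m + 1) by simp at hm; omega, pow_add]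
  ring

end Ballot

open Real Set
open scoped ENNReal Nat

lemma lintegral_pow_mul_exp_neg_mul {s : ℝ} (hs : 0 < s) (k : ℕ) :
    ∫⁻ t in Ioi 0, ENNReal.ofReal (t ^ k * exp (-(s * t)))
      = ENNReal.ofReal (k ! / s ^ (k + 1)) := by
  have hint : ∫ t in Ioi 0, t ^ k * exp (-(s * t)) = k ! / s ^ (k + 1) := by
    have h := integral_rpow_mul_exp_neg_mul_Ioi (a := k + 1) (by positivity) hs
    simp only [add_sub_cancel_right, Real.rpow_natCast] at h
    rw [h, ← Nat.cast_add_one, Real.rpow_natCast, Nat.cast_add_one, Real.Gamma_nat_eq_factorial,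
      one_div, inv_pow, inv_mul_eq_div]
  rw [← hint, ofReal_integral_eq_lintegral_ofReal]
  · refine Integrable.of_integral_ne_zero ?_
    rw [hint]
    positivity
  · filter_upwards [ae_restrict_mem measurableSet_Ioi] with t ht
    exact mul_nonneg (pow_nonneg (le_of_lt ht) k) (exp_pos _).le

instance (r : ℝ) : SFinite (expMeasure r) :=
  inferInstanceAs (SFinite (volume.withDensity _))

instance (r : ℝ) : NullSingletonClass (expMeasure r) :=
  ⟨fun x => withDensity_absolutelyContinuous _ _ (measure_singleton x)⟩

lemma lintegral_expMeasure {r : ℝ} {f : ℝ → ℝ≥0∞} (hf : Measurable f) :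
    ∫⁻ x, f x ∂expMeasure r = ∫⁻ x in Ioi 0, ENNReal.ofReal (r * exp (-(r * x))) * f x := by
  rw [expMeasure, gammaMeasure, lintegral_withDensity_eq_lintegral_mul _
      (show Measurable (gammaPDF 1 r) from (measurable_gammaPDFReal 1 r).ennreal_ofReal) hf,
    ← setLIntegral_eq_of_support_subset (s := Ici 0), ← restrict_Ioi_eq_restrict_Ici]
  · refine setLIntegral_congr_fun measurableSet_Ioi fun x hx => ?_
    rw [Pi.mul_apply, show gammaPDF 1 r x = exponentialPDF r x from rfl,
      exponentialPDF_of_nonneg (le_of_lt hx)]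
  · intro x hx
    by_contra h
    exact hx (by simp [gammaPDF_of_neg (not_le.mp h)])

lemma expMeasure_Ici {r x : ℝ} (hr : 0 < r) (hx : 0 ≤ x) :
    expMeasure r (Ici x) = ENNReal.ofReal (exp (-(r * x))) := by
  have := isProbabilityMeasure_expMeasure hr
  rw [← measure_congr Ioi_ae_eq_Ici, ← compl_Iic, prob_compl_eq_one_sub measurableSet_Iic,
    ← ofReal_cdf, cdf_expMeasure_eq hr, if_pos hx, ← ENNReal.ofReal_one,
    ← ENNReal.ofReal_sub _ (sub_nonneg.mpr (exp_le_one_iff.mpr (by nlinarith))),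
    sub_sub_cancel]

lemma setLIntegral_Ioi_comp_add (f : ℝ → ℝ≥0∞) (t : ℝ) :
    ∫⁻ u in Ioi 0, f (t + u) = ∫⁻ y in Ioi t, f y := by
  rw [← lintegral_indicator measurableSet_Ioi, ← lintegral_indicator measurableSet_Ioi]
  conv_rhs => rw [← lintegral_add_left_eq_self _ t]
  congr 1 with u
  simp [indicator_apply]

lemma lintegral_Ioi_lintegral_Ioo {W : ℝ → ℝ → ℝ≥0∞} (hW : Measurable (Function.uncurry W)) :
    ∫⁻ x in Ioi 0, ∫⁻ t in Ioo 0 x, W t x = ∫⁻ t in Ioi 0, ∫⁻ u in Ioi 0, W t (t + u) := by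
  have hmeas : Measurable (Function.uncurry fun x t => (Iio x).indicator (W · x) t) := by
    simp only [Function.uncurry_def, indicator_apply, mem_Iio]
    exact Measurable.ite (measurableSet_lt measurable_snd measurable_fst)
      (hW.comp measurable_swap) measurable_const
  have hIoo (x : ℝ) :
      ∫⁻ t in Ioo 0 x, W t x = ∫⁻ t in Ioi 0, (Iio x).indicator (W · x) t := by
    rw [← Iio_inter_Ioi, ← Measure.restrict_restrict measurableSet_Iio,
      lintegral_indicator measurableSet_Iio]
  simp_rw [hIoo]
  rw [lintegral_lintegral_swap hmeas.aemeasurable]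
  refine setLIntegral_congr_fun measurableSet_Ioi fun t ht => ?_
  have hind : (fun x => (Iio x).indicator (W · x) t) = (Ioi t).indicator (W t) := by
    ext x
    simp [indicator_apply]
  rw [hind, lintegral_indicator measurableSet_Ioi, Measure.restrict_restrict measurableSet_Ioi,
    inter_eq_left.mpr (Ioi_subset_Ioi (le_of_lt ht)), setLIntegral_Ioi_comp_add]

/-- The density of the Gamma distribution of shape `m + 1` (not `m`) and rate `r`; it is only
ever integrated over `(0, ∞)`. -/
noncomputable def erlangPDFReal (r : ℝ) (m : ℕ) (x : ℝ) : ℝ :=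
  r ^ (m + 1) * x ^ m * exp (-(r * x)) / m !

section Erlang

variable {r : ℝ}

@[fun_prop]
lemma measurable_erlangPDFReal (r : ℝ) (m : ℕ) : Measurable (erlangPDFReal r m) := by
  unfold erlangPDFReal
  fun_prop

lemma erlangPDFReal_nonneg (hr : 0 ≤ r) (m : ℕ) {x : ℝ} (hx : 0 ≤ x) :
    0 ≤ erlangPDFReal r m x := by
  unfold erlangPDFReal
  positivity

lemma erlangPDFReal_zero (r x : ℝ) : erlangPDFReal r 0 x = r * exp (-(r * x)) := by
  simp [erlangPDFReal]

lemma lintegral_erlangPDFReal_mul_exp {lam : ℝ} (hr : 0 ≤ r) (hs : 0 < lam + r) (m : ℕ) :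
    ∫⁻ x in Ioi 0, ENNReal.ofReal (erlangPDFReal r m x) * ENNReal.ofReal (exp (-(lam * x)))
      = ENNReal.ofReal (r / (lam + r)) ^ (m + 1) := by
  have hpoint : ∀ x ∈ Ioi (0 : ℝ),
      ENNReal.ofReal (erlangPDFReal r m x) * ENNReal.ofReal (exp (-(lam * x)))
        = ENNReal.ofReal (r ^ (m + 1) / m !)
          * ENNReal.ofReal (x ^ m * exp (-((lam + r) * x))) := by
    intro x hx
    rw [← ENNReal.ofReal_mul (erlangPDFReal_nonneg hr m (le_of_lt hx)),
      ← ENNReal.ofReal_mul (by positivity), erlangPDFReal]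
    congr 1
    rw [add_mul, neg_add, exp_add]
    ring
  rw [setLIntegral_congr_fun measurableSet_Ioi hpoint, lintegral_const_mul _ (by fun_prop),
    lintegral_pow_mul_exp_neg_mul hs, ← ENNReal.ofReal_mul (by positivity),
    ← ENNReal.ofReal_pow (by positivity), div_pow]
  congr 1
  field_simp

lemma lintegral_erlangPDFReal_mul_exp_sub (hr : 0 ≤ r) (m : ℕ) {x : ℝ} (hx : 0 ≤ x) :
    ∫⁻ t in Ioo 0 x,
        ENNReal.ofReal (erlangPDFReal r m t) * ENNReal.ofReal (r * exp (-(r * (x - t))))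
      = ENNReal.ofReal (erlangPDFReal r (m + 1) x) := by
  have hpoint : ∀ t ∈ Ioo 0 x,
      ENNReal.ofReal (erlangPDFReal r m t) * ENNReal.ofReal (r * exp (-(r * (x - t))))
        = ENNReal.ofReal (r ^ (m + 2) * exp (-(r * x)) / m !) * ENNReal.ofReal (t ^ m) := by
    intro t ht
    rw [← ENNReal.ofReal_mul (erlangPDFReal_nonneg hr m (le_of_lt ht.1)),
      ← ENNReal.ofReal_mul (by positivity), erlangPDFReal]
    congr 1
    rw [show -(r * x) = -(r * t) + -(r * (x - t)) by ring, exp_add]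
    ring
  have hpow :
      ∫⁻ t in Ioo 0 x, ENNReal.ofReal (t ^ m) = ENNReal.ofReal (x ^ (m + 1) / (m + 1)) := by
    rw [← ofReal_integral_eq_lintegral_ofReal, ← integral_Ioc_eq_integral_Ioo,
      ← intervalIntegral.integral_of_le hx, integral_pow]
    · simp
    · exact (continuous_pow m).integrableOn_Icc.mono_set Ioo_subset_Icc_self
    · filter_upwards [ae_restrict_mem measurableSet_Ioo] with t ht
      exact pow_nonneg (le_of_lt ht.1) m
  rw [setLIntegral_congr_fun measurableSet_Ioo hpoint, lintegral_const_mul _ (by fun_prop), hpow,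
    ← ENNReal.ofReal_mul (by positivity), erlangPDFReal, Nat.factorial_succ]
  congr 1
  push_cast
  field_simp

/-- An `Exp(lam)` clock started while `m + 1` phases of rate `r` remain rings after exactly
`m - i` of them are completed with probability `(lam/(lam+r)) (r/(lam+r))^(m-i)`, leaving
`i + 1` phases. -/
lemma lintegral_exp_mul_erlangPDFReal_add {lam : ℝ} (hlam : 0 ≤ lam) (hr : 0 ≤ r)
    (hs : 0 < lam + r) (m : ℕ) {u : ℝ} (hu : 0 ≤ u) :
    ∫⁻ t in Ioi 0,
        ENNReal.ofReal (lam * exp (-(lam * t))) * ENNReal.ofReal (erlangPDFReal r m (t + u))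
      = ∑ i ∈ Finset.range (m + 1), ENNReal.ofReal (lam / (lam + r))
          * ENNReal.ofReal (r / (lam + r)) ^ (m - i) * ENNReal.ofReal (erlangPDFReal r i u) := by
  set c : ℕ → ℝ := fun i => lam * r ^ (m + 1) / m ! * m.choose i * u ^ (m - i) * exp (-(r * u))
  have hpoint : ∀ t ∈ Ioi (0 : ℝ),
      ENNReal.ofReal (lam * exp (-(lam * t))) * ENNReal.ofReal (erlangPDFReal r m (t + u))
        = ∑ i ∈ Finset.range (m + 1),
            ENNReal.ofReal (c i) * ENNReal.ofReal (t ^ i * exp (-((lam + r) * t))) := by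
    intro t ht
    have ht : 0 ≤ t := le_of_lt ht
    simp_rw [← ENNReal.ofReal_mul (show 0 ≤ c _ by positivity)]
    rw [← ENNReal.ofReal_mul (by positivity),
      ← ENNReal.ofReal_sum_of_nonneg (fun i _ => by positivity)]
    congr 1
    have hexp : exp (-(lam * t)) * exp (-(r * (t + u)))
        = exp (-((lam + r) * t)) * exp (-(r * u)) := by
      rw [← exp_add, ← exp_add]
      ring_nf
    rw [erlangPDFReal, add_pow, Finset.mul_sum, Finset.sum_mul, Finset.sum_div, Finset.mul_sum]
    refine Finset.sum_congr rfl fun i _ => ?_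
    linear_combination (lam * r ^ (m + 1) / m ! * t ^ i * u ^ (m - i) * m.choose i) * hexp
  rw [setLIntegral_congr_fun measurableSet_Ioi hpoint,
    lintegral_finsetSum _ (fun i _ => by fun_prop), ← Finset.sum_range_reflect]
  refine Finset.sum_congr rfl fun i hi => ?_
  have hi : i ≤ m := Nat.lt_succ_iff.mp (Finset.mem_range.mp hi)
  rw [lintegral_const_mul _ (by fun_prop), lintegral_pow_mul_exp_neg_mul hs,
    ← ENNReal.ofReal_pow (by positivity), ← ENNReal.ofReal_mul (by positivity),
    ← ENNReal.ofReal_mul (by positivity), ← ENNReal.ofReal_mul (by positivity),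
    show m + 1 - 1 - i = m - i by omega]
  congr 1
  have hpow : r ^ (m + 1) = r ^ (m - i) * r ^ (i + 1) := by
    rw [← pow_add]; congr 1; omega
  simp only [c, erlangPDFReal, Nat.sub_sub_self hi, Nat.cast_choose ℝ (Nat.sub_le m i), hpow,
    div_pow]
  field_simp
  ring

lemma lintegral_erlangPDFReal_mul_lintegral_expMeasure_add (hr : 0 ≤ r) (m : ℕ)
    {H : ℝ → ℝ≥0∞} (hH : Measurable H) :
    ∫⁻ u in Ioi 0, ENNReal.ofReal (erlangPDFReal r m u) * ∫⁻ v, H (u + v) ∂expMeasure r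
      = ∫⁻ y in Ioi 0, ENNReal.ofReal (erlangPDFReal r (m + 1) y) * H y := by
  set W : ℝ → ℝ → ℝ≥0∞ := fun t y =>
    ENNReal.ofReal (erlangPDFReal r m t) * ENNReal.ofReal (r * exp (-(r * (y - t)))) * H y
  have hW : Measurable (Function.uncurry W) := by
    simp only [W, Function.uncurry_def]
    fun_prop
  calc ∫⁻ u in Ioi 0, ENNReal.ofReal (erlangPDFReal r m u) * ∫⁻ v, H (u + v) ∂expMeasure r
      = ∫⁻ u in Ioi 0, ∫⁻ v in Ioi 0, W u (u + v) := by
        refine lintegral_congr fun u => ?_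
        rw [lintegral_expMeasure (by fun_prop), ← lintegral_const_mul _ (by fun_prop)]
        simp only [W, add_sub_cancel_left, mul_assoc]
    _ = ∫⁻ y in Ioi 0, ∫⁻ t in Ioo 0 y, W t y := (lintegral_Ioi_lintegral_Ioo hW).symm
    _ = ∫⁻ y in Ioi 0, ENNReal.ofReal (erlangPDFReal r (m + 1) y) * H y := by
        refine setLIntegral_congr_fun measurableSet_Ioi fun y hy => ?_
        rw [lintegral_mul_const _ (by fun_prop),
          lintegral_erlangPDFReal_mul_exp_sub hr m (le_of_lt hy)]

end Erlang

lemma lintegral_comp_eq_lintegral_lintegral_map_of_indepFun {Ω α β : Type*}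
    [MeasurableSpace Ω] [MeasurableSpace α] [MeasurableSpace β] {P : Measure Ω}
    [IsFiniteMeasure P] {X : Ω → α} {Y : Ω → β} (hX : Measurable X) (hY : Measurable Y)
    (hXY : IndepFun X Y P) {g : α × β → ℝ≥0∞} (hg : Measurable g) :
    ∫⁻ ω, g (X ω, Y ω) ∂P = ∫⁻ ω, ∫⁻ y, g (X ω, y) ∂(P.map Y) ∂P := by
  rw [← lintegral_map hg (hX.prodMk hY),
    (indepFun_iff_map_prod_eq_prod_map_map hX.aemeasurable hY.aemeasurable).mp hXY,
    lintegral_prod _ hg.aemeasurable, lintegral_map (hg.lintegral_prod_right') hX]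

lemma setLIntegral_comp_eq_of_indep {Ω α β : Type*} {m mΩ : MeasurableSpace Ω}
    [MeasurableSpace α] [MeasurableSpace β] {P : Measure Ω} [IsFiniteMeasure P] (hm : m ≤ mΩ)
    {A : Set Ω} (hA : MeasurableSet[m] A) {X : Ω → α} (hX : Measurable[m] X)
    {Y : Ω → β} (hY : Measurable Y) (hind : Indep m (MeasurableSpace.comap Y inferInstance) P)
    {h : α × β → ℝ≥0∞} (hh : Measurable h) :
    ∫⁻ ω in A, h (X ω, Y ω) ∂P = ∫⁻ ω in A, ∫⁻ y, h (X ω, y) ∂(P.map Y) ∂P := by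
  have hZ : Measurable[m] fun ω => (A.indicator (1 : Ω → ℝ≥0∞) ω, X ω) :=
    (measurable_const.indicator hA).prodMk hX
  have hZY : IndepFun (fun ω => (A.indicator (1 : Ω → ℝ≥0∞) ω, X ω)) Y P :=
    (IndepFun_iff_Indep _ _ _).mpr (indep_of_indep_of_le_left hind hZ.comap_le)
  have key := lintegral_comp_eq_lintegral_lintegral_map_of_indepFun (hZ.mono hm le_rfl) hY hZY
    (g := fun z => z.1.1 * h (z.1.2, z.2)) (by fun_prop)
  have hmul (f : Ω → ℝ≥0∞) : ∫⁻ ω in A, f ω ∂P = ∫⁻ ω, A.indicator 1 ω * f ω ∂P := by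
    rw [← lintegral_indicator (hm _ hA)]
    congr 1 with ω
    by_cases hω : ω ∈ A <;> simp [hω]
  rw [hmul, hmul, key]
  congr 1 with ω
  exact lintegral_const_mul _ (hh.comp measurable_prodMk_left)

lemma measurable_iSup₂_comap {Ω ι β : Type*} [mβ : MeasurableSpace β] {f : ι → Ω → β}
    {S : Set ι} {i : ι} (hi : i ∈ S) : Measurable[⨆ i ∈ S, mβ.comap (f i)] (f i) :=
  (comap_measurable (f i)).mono (le_iSup₂ (f := fun i (_ : i ∈ S) => mβ.comap (f i)) i hi) le_rfl

namespace BusyPeriod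

variable {Ω : Type*} (τ σ : ℕ → Ω → ℝ)

/-- The unfinished work just after customer `n` arrives, as long as the busy period lasts:
customer `j + 1` arrives `τ j` after customer `j`. -/
def workload (n : ℕ) (ω : Ω) : ℝ :=
  ∑ j ∈ Finset.range (n + 1), σ j ω - ∑ j ∈ Finset.range n, τ j ω

def survival (n : ℕ) : Set Ω :=
  {ω | ∀ i < n, ∑ j ∈ Finset.range (i + 1), τ j ω < ∑ j ∈ Finset.range (i + 1), σ j ω}

abbrev history (n : ℕ) : MeasurableSpace Ω :=
  ⨆ i ∈ {i : ℕ ⊕ ℕ | Sum.elim (· < n) (· ≤ n) i},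
    MeasurableSpace.comap (Sum.elim τ σ i) inferInstance

noncomputable def stepKernel (lam mu : ℝ) (F : ℝ → ℝ≥0∞) (d : ℝ) : ℝ≥0∞ :=
  ∫⁻ y, (if y.1 < d then F (d - y.1 + y.2) else 0) ∂(expMeasure lam).prod (expMeasure mu)

section StepKernel

variable {lam mu : ℝ} {F : ℝ → ℝ≥0∞}

lemma stepKernel_eq (hF : Measurable F) (d : ℝ) :
    stepKernel lam mu F d
      = ∫⁻ t in Ioo 0 d, ENNReal.ofReal (lam * exp (-(lam * t)))
          * ∫⁻ v, F (d - t + v) ∂expMeasure mu := by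
  have hmeas : Measurable fun y : ℝ × ℝ => if y.1 < d then F (d - y.1 + y.2) else 0 :=
    Measurable.ite (measurableSet_lt measurable_fst measurable_const) (by fun_prop)
      measurable_const
  rw [stepKernel, lintegral_prod _ hmeas.aemeasurable,
    lintegral_expMeasure hmeas.lintegral_prod_right', ← Iio_inter_Ioi,
    ← Measure.restrict_restrict measurableSet_Iio, ← lintegral_indicator measurableSet_Iio]
  refine lintegral_congr fun t => ?_
  by_cases ht : t < d <;> simp [ht]

lemma measurable_stepKernel (hF : Measurable F) : Measurable (stepKernel lam mu F) := by
  have hmeas : Measurable fun p : ℝ × ℝ × ℝ =>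
      if p.2.1 < p.1 then F (p.1 - p.2.1 + p.2.2) else 0 :=
    Measurable.ite (measurableSet_lt (by fun_prop) measurable_fst) (by fun_prop) measurable_const
  exact hmeas.lintegral_prod_right'

lemma lintegral_erlangPDFReal_mul_stepKernel (hlam : 0 ≤ lam) (hmu : 0 ≤ mu)
    (hs : 0 < lam + mu) (m : ℕ) (hF : Measurable F) :
    ∫⁻ x in Ioi 0, ENNReal.ofReal (erlangPDFReal mu m x) * stepKernel lam mu F x
      = ∑ r ∈ Finset.range (m + 1),
          ENNReal.ofReal (lam / (lam + mu)) * ENNReal.ofReal (mu / (lam + mu)) ^ (m - r)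
            * ∫⁻ y in Ioi 0, ENNReal.ofReal (erlangPDFReal mu (r + 1) y) * F y := by
  set G : ℝ → ℝ≥0∞ := fun u => ∫⁻ v, F (u + v) ∂expMeasure mu
  have hG : Measurable G := (hF.comp measurable_add).lintegral_prod_right'
  set W : ℝ → ℝ → ℝ≥0∞ := fun t x =>
    ENNReal.ofReal (lam * exp (-(lam * t))) * ENNReal.ofReal (erlangPDFReal mu m x) * G (x - t)
  have hW : Measurable (Function.uncurry W) := by
    simp only [W, Function.uncurry_def]
    fun_prop
  calc ∫⁻ x in Ioi 0, ENNReal.ofReal (erlangPDFReal mu m x) * stepKernel lam mu F x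
      = ∫⁻ x in Ioi 0, ∫⁻ t in Ioo 0 x, W t x := by
        refine lintegral_congr fun x => ?_
        rw [stepKernel_eq hF, ← lintegral_const_mul _ (by fun_prop)]
        refine lintegral_congr fun t => ?_
        simp only [W, G]
        ring
    _ = ∫⁻ t in Ioi 0, ∫⁻ u in Ioi 0, W t (t + u) := lintegral_Ioi_lintegral_Ioo hW
    _ = ∫⁻ u in Ioi 0, (∫⁻ t in Ioi 0, ENNReal.ofReal (lam * exp (-(lam * t)))
          * ENNReal.ofReal (erlangPDFReal mu m (t + u))) * G u := by
        rw [lintegral_lintegral_swap (by simp only [W]; fun_prop)]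
        refine lintegral_congr fun u => ?_
        rw [← lintegral_mul_const _ (by fun_prop)]
        simp only [W, add_sub_cancel_left]
    _ = ∫⁻ u in Ioi 0, ∑ r ∈ Finset.range (m + 1),
          ENNReal.ofReal (lam / (lam + mu)) * ENNReal.ofReal (mu / (lam + mu)) ^ (m - r)
            * (ENNReal.ofReal (erlangPDFReal mu r u) * G u) := by
        refine setLIntegral_congr_fun measurableSet_Ioi fun u hu => ?_
        rw [lintegral_exp_mul_erlangPDFReal_add hlam hmu hs m (le_of_lt hu), Finset.sum_mul]
        simp only [mul_assoc]
    _ = _ := by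
        rw [lintegral_finsetSum _ (fun r _ => by fun_prop)]
        refine Finset.sum_congr rfl fun r _ => ?_
        rw [lintegral_const_mul _ (by fun_prop),
          lintegral_erlangPDFReal_mul_lintegral_expMeasure_add hmu r hF]

end StepKernel

variable {τ σ} {n : ℕ}

lemma workload_succ (ω : Ω) :
    workload τ σ (n + 1) ω = workload τ σ n ω - τ n ω + σ (n + 1) ω := by
  simp only [workload, Finset.sum_range_succ _ (n + 1), Finset.sum_range_succ _ n]
  ring

lemma survival_zero : survival τ σ 0 = univ := by simp [survival]

lemma survival_succ :
    survival τ σ (n + 1) = survival τ σ n ∩ {ω | τ n ω < workload τ σ n ω} := by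
  ext ω
  simp only [survival, workload, mem_ofPred_eq, mem_inter_iff, Nat.lt_succ_iff_lt_or_eq,
    or_imp, forall_and, forall_eq, Finset.sum_range_succ _ n]
  constructor <;> rintro ⟨h1, h2⟩ <;> exact ⟨h1, by linarith⟩

lemma busyDelta_eq :
    busyDelta τ σ n = survival τ σ n ∩ {ω | workload τ σ n ω ≤ τ n ω} := by
  ext ω
  simp only [busyDelta, survival, workload, mem_ofPred_eq, mem_inter_iff,
    Finset.sum_range_succ _ n]
  constructor <;> rintro ⟨h1, h2⟩ <;> exact ⟨h1, by linarith⟩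

lemma measurable_workload {m : MeasurableSpace Ω} (hτ : ∀ j < n, Measurable[m] (τ j))
    (hσ : ∀ j ≤ n, Measurable[m] (σ j)) : Measurable[m] (workload τ σ n) :=
  (Finset.measurable_sum _ fun j hj => hσ j (by simp at hj; omega)).sub
    (Finset.measurable_sum _ fun j hj => hτ j (by simpa using hj))

lemma measurableSet_survival {m : MeasurableSpace Ω} (hτ : ∀ j < n, Measurable[m] (τ j))
    (hσ : ∀ j ≤ n, Measurable[m] (σ j)) : MeasurableSet[m] (survival τ σ n) := by
  have h : survival τ σ n = ⋂ i ∈ Finset.range n,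
      {ω | ∑ j ∈ Finset.range (i + 1), τ j ω < ∑ j ∈ Finset.range (i + 1), σ j ω} := by
    ext
    simp [survival]
  rw [h]
  refine Finset.measurableSet_biInter _ fun i hi => measurableSet_lt ?_ ?_
  · exact Finset.measurable_sum _ fun j hj => hτ j (by simp at hi hj; omega)
  · exact Finset.measurable_sum _ fun j hj => hσ j (by simp at hi hj; omega)

lemma measurable_history_inl {j : ℕ} (hj : j < n) : Measurable[history τ σ n] (τ j) :=
  measurable_iSup₂_comap (f := Sum.elim τ σ) (i := Sum.inl j) hj

lemma measurable_history_inr {j : ℕ} (hj : j ≤ n) : Measurable[history τ σ n] (σ j) :=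
  measurable_iSup₂_comap (f := Sum.elim τ σ) (i := Sum.inr j) hj

section Probability

variable [MeasurableSpace Ω]

lemma measurable_sumElim (hτm : ∀ j, Measurable (τ j)) (hσm : ∀ j, Measurable (σ j)) :
    ∀ i, Measurable (Sum.elim τ σ i)
  | .inl j => hτm j
  | .inr j => hσm j

lemma history_le (hτm : ∀ j, Measurable (τ j)) (hσm : ∀ j, Measurable (σ j)) :
    history τ σ n ≤ ‹MeasurableSpace Ω› :=
  iSup₂_le fun i _ => (measurable_sumElim hτm hσm i).comap_le

lemma indep_history_next {P : Measure Ω} (hτm : ∀ j, Measurable (τ j))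
    (hσm : ∀ j, Measurable (σ j)) (hindep : iIndepFun (Sum.elim τ σ) P) :
    Indep (history τ σ n)
      (MeasurableSpace.comap (fun ω => (τ n ω, σ (n + 1) ω)) inferInstance) P := by
  have hdisj : Disjoint {i : ℕ ⊕ ℕ | Sum.elim (· < n) (· ≤ n) i}
      {Sum.inl n, Sum.inr (n + 1)} := by
    rw [Set.disjoint_left]
    rintro i hi (rfl | rfl) <;> simp at hi
  refine indep_of_indep_of_le_right
    (indep_iSup_of_disjoint (fun i => (measurable_sumElim hτm hσm i).comap_le) hindep.iIndep
      hdisj)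
    (Measurable.comap_le (Measurable.prodMk ?_ ?_))
  · exact measurable_iSup₂_comap (f := Sum.elim τ σ) (i := Sum.inl n) (by simp)
  · exact measurable_iSup₂_comap (f := Sum.elim τ σ) (i := Sum.inr (n + 1)) (by simp)

variable {P : Measure Ω} [IsFiniteMeasure P] {lam mu : ℝ}

lemma setLIntegral_survival_comp_next (hτm : ∀ j, Measurable (τ j))
    (hσm : ∀ j, Measurable (σ j)) (hindep : iIndepFun (Sum.elim τ σ) P)
    (hτ : P.map (τ n) = expMeasure lam)
    (hσ : P.map (σ (n + 1)) = expMeasure mu) {h : ℝ × ℝ × ℝ → ℝ≥0∞} (hh : Measurable h) :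
    ∫⁻ ω in survival τ σ n, h (workload τ σ n ω, τ n ω, σ (n + 1) ω) ∂P
      = ∫⁻ ω in survival τ σ n,
          ∫⁻ y, h (workload τ σ n ω, y) ∂(expMeasure lam).prod (expMeasure mu) ∂P := by
  have hlaw : P.map (fun ω => (τ n ω, σ (n + 1) ω)) = (expMeasure lam).prod (expMeasure mu) := by
    rw [← hτ, ← hσ]
    exact (indepFun_iff_map_prod_eq_prod_map_map (hτm n).aemeasurable (hσm _).aemeasurable).mp
      (hindep.indepFun Sum.inl_ne_inr)
  rw [← hlaw]
  exact setLIntegral_comp_eq_of_indep (history_le hτm hσm)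
    (measurableSet_survival (fun _ => measurable_history_inl) (fun _ => measurable_history_inr))
    (measurable_workload (fun _ => measurable_history_inl) (fun _ => measurable_history_inr))
    ((hτm n).prodMk (hσm _)) (indep_history_next hτm hσm hindep) hh

lemma setLIntegral_survival_succ (hτm : ∀ j, Measurable (τ j))
    (hσm : ∀ j, Measurable (σ j)) (hindep : iIndepFun (Sum.elim τ σ) P)
    (hτ : P.map (τ n) = expMeasure lam)
    (hσ : P.map (σ (n + 1)) = expMeasure mu) {F : ℝ → ℝ≥0∞} (hF : Measurable F) :
    ∫⁻ ω in survival τ σ (n + 1), F (workload τ σ (n + 1) ω) ∂P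
      = ∫⁻ ω in survival τ σ n, stepKernel lam mu F (workload τ σ n ω) ∂P := by
  set h : ℝ × ℝ × ℝ → ℝ≥0∞ := fun p => if p.2.1 < p.1 then F (p.1 - p.2.1 + p.2.2) else 0
  have hh : Measurable h :=
    Measurable.ite (measurableSet_lt (by fun_prop) measurable_fst) (by fun_prop) measurable_const
  have hB : MeasurableSet {ω | τ n ω < workload τ σ n ω} :=
    measurableSet_lt (hτm n) (measurable_workload (fun j _ => hτm j) (fun j _ => hσm j))
  rw [survival_succ, inter_comm, ← Measure.restrict_restrict hB, ← lintegral_indicator hB]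
  calc _ = ∫⁻ ω in survival τ σ n, h (workload τ σ n ω, τ n ω, σ (n + 1) ω) ∂P := by
        congr 1 with ω
        by_cases hω : τ n ω < workload τ σ n ω <;> simp [h, hω, workload_succ]
    _ = _ := setLIntegral_survival_comp_next hτm hσm hindep hτ hσ hh

lemma measure_busyDelta (hτm : ∀ j, Measurable (τ j))
    (hσm : ∀ j, Measurable (σ j)) (hindep : iIndepFun (Sum.elim τ σ) P)
    (hmu : 0 < mu) (hτ : P.map (τ n) = expMeasure lam)
    (hσ : P.map (σ (n + 1)) = expMeasure mu) :
    P (busyDelta τ σ n)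
      = ∫⁻ ω in survival τ σ n, expMeasure lam (Ici (workload τ σ n ω)) ∂P := by
  have := isProbabilityMeasure_expMeasure hmu
  set E : Set (ℝ × ℝ × ℝ) := {p | p.1 ≤ p.2.1}
  have hE : MeasurableSet E := measurableSet_le measurable_fst (by fun_prop)
  have hB : MeasurableSet {ω | workload τ σ n ω ≤ τ n ω} :=
    measurableSet_le (measurable_workload (fun j _ => hτm j) (fun j _ => hσm j)) (hτm n)
  have hslice (d : ℝ) :
      (fun y => E.indicator (1 : ℝ × ℝ × ℝ → ℝ≥0∞) (d, y)) = (Ici d ×ˢ univ).indicator 1 := by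
    ext y
    simp [E, indicator_apply]
  rw [busyDelta_eq, inter_comm, ← Measure.restrict_apply hB, ← lintegral_indicator_one hB]
  change ∫⁻ ω in survival τ σ n, E.indicator 1 (workload τ σ n ω, τ n ω, σ (n + 1) ω) ∂P = _
  rw [setLIntegral_survival_comp_next hτm hσm hindep hτ hσ (measurable_one.indicator hE)]
  congr 1 with ω
  rw [hslice, lintegral_indicator_one (measurableSet_Ici.prod MeasurableSet.univ),
    Measure.prod_prod, measure_univ, mul_one]

theorem setLIntegral_survival_eq_sum (hτm : ∀ j, Measurable (τ j))
    (hσm : ∀ j, Measurable (σ j)) (hindep : iIndepFun (Sum.elim τ σ) P)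
    (hlam : 0 ≤ lam) (hmu : 0 ≤ mu) (hs : 0 < lam + mu)
    (hτ : ∀ j, P.map (τ j) = expMeasure lam) (hσ : ∀ j, P.map (σ j) = expMeasure mu)
    (n : ℕ) {F : ℝ → ℝ≥0∞} (hF : Measurable F) :
    ∫⁻ ω in survival τ σ n, F (workload τ σ n ω) ∂P
      = ∑ m ∈ Finset.range (n + 1), ENNReal.ofReal (lam / (lam + mu)) ^ n
          * ENNReal.ofReal (mu / (lam + mu)) ^ (n - m) * ballot n m
            * ∫⁻ x in Ioi 0, ENNReal.ofReal (erlangPDFReal mu m x) * F x := by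
  induction n generalizing F with
  | zero =>
    have hw : ∀ ω, workload τ σ 0 ω = σ 0 ω := by simp [workload]
    simp only [hw, survival_zero, Measure.restrict_univ]
    rw [← lintegral_map hF (hσm 0), hσ 0, lintegral_expMeasure hF]
    simp [ballot, erlangPDFReal_zero]
  | succ n ih =>
    rw [setLIntegral_survival_succ hτm hσm hindep (hτ n) (hσ (n + 1)) hF,
      ih (measurable_stepKernel hF), ← sum_ballot_mul_sum]
    refine Finset.sum_congr rfl fun m _ => ?_
    rw [lintegral_erlangPDFReal_mul_stepKernel hlam hmu hs m hF]

end Probability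

end BusyPeriod

/-- `P(Δ_n) = C_n · λ^n · μ^(n+1) / (λ+μ)^(2n+1)`. -/
theorem prob_busyDelta
    {Ω : Type*} [MeasurableSpace Ω] (P : Measure Ω) [IsProbabilityMeasure P]
    (lam mu : ℝ) (hlam : 0 < lam) (hmu : 0 < mu)
    (τ σ : ℕ → Ω → ℝ)
    (hτm : ∀ j, Measurable (τ j)) (hσm : ∀ j, Measurable (σ j))
    (hindep : iIndepFun (Sum.elim τ σ) P)
    (hτ : ∀ j, P.map (τ j) = expMeasure lam)
    (hσ : ∀ j, P.map (σ j) = expMeasure mu)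
    (n : ℕ) :
    P (busyDelta τ σ n)
      = ENNReal.ofReal ((catalan n : ℝ) * lam ^ n * mu ^ (n + 1) / (lam + mu) ^ (2 * n + 1)) := by
  have hs : 0 < lam + mu := add_pos hlam hmu
  have htail : Measurable fun x => expMeasure lam (Ici x) :=
    Antitone.measurable fun x y hxy => measure_mono (Ici_subset_Ici.mpr hxy)
  have herlang (m : ℕ) :
      ∫⁻ x in Ioi 0, ENNReal.ofReal (erlangPDFReal mu m x) * expMeasure lam (Ici x)
        = ENNReal.ofReal (mu / (lam + mu)) ^ (m + 1) := by
    rw [← lintegral_erlangPDFReal_mul_exp hmu.le hs m]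
    exact setLIntegral_congr_fun measurableSet_Ioi fun x hx => by rw [expMeasure_Ici hlam hx.le]
  rw [BusyPeriod.measure_busyDelta hτm hσm hindep hmu (hτ n) (hσ (n + 1)),
    BusyPeriod.setLIntegral_survival_eq_sum hτm hσm hindep hlam.le hmu.le hs hτ hσ n htail]
  simp_rw [herlang, sum_pow_mul_ballot_mul_pow]
  rw [← ENNReal.ofReal_pow (by positivity), ← ENNReal.ofReal_pow (by positivity),
    ← ENNReal.ofReal_natCast, ← ENNReal.ofReal_mul (by positivity),
    ← ENNReal.ofReal_mul (by positivity)]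
  congr 1
  rw [div_pow, div_pow, show 2 * n + 1 = n + (n + 1) by ring, pow_add]
  field_simp
  ring
end

section
/- For every integer k ≥ 0, 𝓡_k^{(k)}(z) = C_k · z, and for all integers n > k ≥ 1 the polynomial identity 𝓡_n^{(k)}(z) = Σ_{i=k}^{n−1} 𝓡_i^{(k)}(z) · C_{n−1−i} + Σ_{l=0}^{k−1} C_{k−1−l} · 𝓡_{n−k+l}^{(l)}(z) holds (first-return decomposition of Dyck paths applied to the generating polynomials 𝓡_n^{(k)}). -/
/-!
Cutting a nonempty Dyck path at its first return to the axis writes it uniquely as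
`U π₁ D π₂` with `π₁ ∈ 𝒟_a` and `π₂ ∈ 𝒟_{n-1-a}`. If `1 ≤ k ≤ a`, the contacts of `U π₁ D π₂`
with the line `y = x - 2k` are those of `π₁`, shifted by one step; if `a < k ≤ n`, they are
those of `π₂` with the line `y = x - 2(k - a - 1)`, shifted by `2a + 2` steps. Summing
`z ^ (α_k + 1)` over the decomposition gives the two sums of the recursion (the second after
substituting `l = k - 1 - a`); for `k = n` the endpoint is the only contact.

Paths are handled as Boolean sequences on `ℕ` (padded with down-steps), so that the number of
up-steps among the first `m` is `Nat.count`, and the height after `m` steps is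
`2 * Nat.count _ m - m`.
-/

/-- A path of length `2n` is encoded by `w : Fin (2*n) → Bool`, where `true` stands for a step
`(1,1)` and `false` for a step `(1,-1)`. `upCount n w m` is the number of up-steps among the
first `m` steps; the height of the path after `m` steps is `2 * upCount n w m - m`. -/
def upCount (n : ℕ) (w : Fin (2 * n) → Bool) (m : ℕ) : ℕ :=
  (Finset.univ.filter (fun p : Fin (2 * n) => (p : ℕ) < m ∧ w p = true)).card

/-- `w` encodes a Dyck path of length `2n`: starts at `(0,0)`, ends at `(2n,0)`, stays weakly
above the x-axis. -/
def IsDyckPath (n : ℕ) (w : Fin (2 * n) → Bool) : Prop :=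
  (∀ m ≤ 2 * n, m ≤ 2 * upCount n w m) ∧ upCount n w (2 * n) = n

open Classical in
/-- The finite set `𝒟_n` of Dyck paths of length `2n`. -/
noncomputable def dyckPaths (n : ℕ) : Finset (Fin (2 * n) → Bool) :=
  Finset.univ.filter (fun w => IsDyckPath n w)

/-- `alpha n w j + 1` is the number of lattice points common to the path `w` and the line
`y = x - 2j`, i.e. the number of `m ∈ {0, …, 2n}` with height `2 * upCount n w m - m = m - 2j`,
equivalently `upCount n w m + j = m`. -/
def alpha (n : ℕ) (w : Fin (2 * n) → Bool) (j : ℕ) : ℕ :=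
  ((Finset.range (2 * n + 1)).filter (fun m => upCount n w m + j = m)).card - 1

/-- The Dyck polynomial `P_n(y_0, …, y_{n-1}) = Σ_{π ∈ 𝒟_n} Π_{i=0}^{n-1} y_i^{α_i(π)}/α_i(π)!`
(the argument `y : ℕ → ℝ` is only used through its first `n` values; `P_0 = 1`). -/
noncomputable def Ppoly (n : ℕ) (y : ℕ → ℝ) : ℝ :=
  ∑ w ∈ dyckPaths n, ∏ i ∈ Finset.range n, y i ^ alpha n w i / (alpha n w i).factorial

/-- The Dyck polynomial `R_n(y_0, …, y_{n-1}) = Σ_{π ∈ 𝒟_n} Π_{i=0}^{n-1} y_i^{α_i(π)}`. -/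
noncomputable def Rpoly (n : ℕ) (y : ℕ → ℝ) : ℝ :=
  ∑ w ∈ dyckPaths n, ∏ i ∈ Finset.range n, y i ^ alpha n w i

/-- The one-variable Dyck polynomial `𝓡_n^{(i)}(z) = Σ_{π ∈ 𝒟_n} z^{α_i(π)+1}`. -/
noncomputable def calR (n i : ℕ) (z : ℝ) : ℝ :=
  ∑ w ∈ dyckPaths n, z ^ (alpha n w i + 1)

open Finset

namespace DyckPath

def IsDyckSeq (n : ℕ) (W : ℕ → Bool) : Prop :=
  (∀ m ≤ 2 * n, m ≤ 2 * Nat.count (W · = true) m) ∧ Nat.count (W · = true) (2 * n) = n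

/-- The path `U W₁ D W₂`, where `W₁` is read on its first `2 * a` steps only. -/
def glueSeq (a : ℕ) (W₁ W₂ : ℕ → Bool) : ℕ → Bool
  | 0 => true
  | m + 1 => if m < 2 * a then W₁ m else if m = 2 * a then false else W₂ (m - (2 * a + 1))

/-- `a ∈ returns W` when the path is back on the axis after `2 * (a + 1)` steps, so that
`firstReturn W` is the semilength of the part enclosed by the first arch. -/
def returns (W : ℕ → Bool) : Set ℕ := {a | Nat.count (W · = true) (2 * a + 2) = a + 1}

noncomputable def firstReturn (W : ℕ → Bool) : ℕ := sInf (returns W)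

section Glue

variable {a : ℕ} {W₁ W₂ : ℕ → Bool}

lemma glueSeq_succ_of_lt {m : ℕ} (hm : m < 2 * a) : glueSeq a W₁ W₂ (m + 1) = W₁ m := by
  simp [glueSeq, hm]

lemma glueSeq_two_mul_add_one : glueSeq a W₁ W₂ (2 * a + 1) = false := by
  simp [glueSeq]

lemma glueSeq_two_mul_add_two_add (j : ℕ) : glueSeq a W₁ W₂ (2 * a + 2 + j) = W₂ j := by
  rw [show 2 * a + 2 + j = (2 * a + 1 + j) + 1 by omega, glueSeq, if_neg (by omega),
    if_neg (by omega), Nat.add_sub_cancel_left]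

lemma count_glueSeq_succ {m : ℕ} (hm : m ≤ 2 * a) :
    Nat.count (glueSeq a W₁ W₂ · = true) (m + 1) = Nat.count (W₁ · = true) m + 1 := by
  induction m with
  | zero => simp [Nat.count_one, glueSeq]
  | succ m ih =>
    rw [Nat.count_succ, ih (by omega), Nat.count_succ, glueSeq_succ_of_lt (by omega)]
    omega

lemma count_glueSeq_two_mul_add_two :
    Nat.count (glueSeq a W₁ W₂ · = true) (2 * a + 2) = Nat.count (W₁ · = true) (2 * a) + 1 := by
  rw [Nat.count_succ, count_glueSeq_succ le_rfl, glueSeq_two_mul_add_one]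
  simp

lemma count_glueSeq_two_mul_add_two_add (j : ℕ) :
    Nat.count (glueSeq a W₁ W₂ · = true) (2 * a + 2 + j) =
      Nat.count (W₁ · = true) (2 * a) + 1 + Nat.count (W₂ · = true) j := by
  rw [Nat.count_add, count_glueSeq_two_mul_add_two]
  simp only [glueSeq_two_mul_add_two_add]

end Glue

section FirstReturn

variable {n : ℕ} {W : ℕ → Bool}

lemma firstReturn_eq {a : ℕ} (ha : Nat.count (W · = true) (2 * a + 2) = a + 1)
    (hmin : ∀ b < a, Nat.count (W · = true) (2 * b + 2) ≠ b + 1) : firstReturn W = a :=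
  IsLeast.csInf_eq ⟨ha, fun b hb => not_lt.mp fun hlt => hmin b hlt hb⟩

variable (hW : IsDyckSeq n W) (hn : 1 ≤ n)
include hW hn

lemma IsDyckSeq.sub_one_mem_returns : n - 1 ∈ returns W := by
  show Nat.count _ (2 * (n - 1) + 2) = n - 1 + 1
  rw [show 2 * (n - 1) + 2 = 2 * n by omega, hW.2]
  omega

lemma IsDyckSeq.count_firstReturn :
    Nat.count (W · = true) (2 * firstReturn W + 2) = firstReturn W + 1 :=
  Nat.sInf_mem ⟨_, hW.sub_one_mem_returns hn⟩

lemma IsDyckSeq.firstReturn_lt : firstReturn W < n := by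
  have := Nat.sInf_le (hW.sub_one_mem_returns hn)
  unfold firstReturn
  omega

lemma IsDyckSeq.lt_two_mul_count {t : ℕ} (ht₀ : 1 ≤ t) (ht : t ≤ 2 * firstReturn W + 1) :
    t < 2 * Nat.count (W · = true) t := by
  have hle := hW.1 t (by have := hW.firstReturn_lt hn; omega)
  obtain ⟨s, rfl | rfl⟩ := Nat.even_or_odd' t
  · have hne : s - 1 ∉ returns W := Nat.notMem_of_lt_sInf (by unfold firstReturn at ht; omega)
    simp only [returns, Set.mem_ofPred_eq] at hne
    rw [show 2 * (s - 1) + 2 = 2 * s by omega] at hne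
    omega
  · omega

lemma IsDyckSeq.apply_zero : W 0 = true := by
  have := hW.lt_two_mul_count hn le_rfl (by omega)
  by_contra h
  simp [Nat.count_one, h] at this

lemma IsDyckSeq.apply_two_mul_firstReturn_add_one : W (2 * firstReturn W + 1) = false := by
  have hpre := hW.lt_two_mul_count hn (t := 2 * firstReturn W + 1) (by omega) le_rfl
  have hret := hW.count_firstReturn hn
  rw [Nat.count_succ] at hret
  by_contra h
  rw [Bool.not_eq_false] at h
  simp [h] at hret
  omega

end FirstReturn

section GlueDyck

variable {n a : ℕ} {W₁ W₂ : ℕ → Bool}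

lemma isDyckSeq_glueSeq (ha : a < n) (h₁ : IsDyckSeq a W₁) (h₂ : IsDyckSeq (n - 1 - a) W₂) :
    IsDyckSeq n (glueSeq a W₁ W₂) := by
  refine ⟨fun m hm => ?_, ?_⟩
  · rcases Nat.lt_or_ge m (2 * a + 2) with hm' | hm'
    · rcases m with _ | m
      · simp
      rw [count_glueSeq_succ (by omega)]
      have := h₁.1 m (by omega)
      omega
    · obtain ⟨j, rfl⟩ := Nat.exists_eq_add_of_le hm'
      rw [count_glueSeq_two_mul_add_two_add, h₁.2]
      have := h₂.1 j (by omega)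
      omega
  · rw [show 2 * n = 2 * a + 2 + 2 * (n - 1 - a) by omega, count_glueSeq_two_mul_add_two_add,
      h₁.2, h₂.2]
    omega

lemma firstReturn_glueSeq (h₁ : IsDyckSeq a W₁) : firstReturn (glueSeq a W₁ W₂) = a := by
  refine firstReturn_eq (by rw [count_glueSeq_two_mul_add_two, h₁.2]) fun b hb => ?_
  rw [count_glueSeq_succ (by omega)]
  have := h₁.1 (2 * b + 1) (by omega)
  omega

lemma IsDyckSeq.of_glueSeq (ha : a < n) (hG : IsDyckSeq n (glueSeq a W₁ W₂))
    (hret : firstReturn (glueSeq a W₁ W₂) = a) : IsDyckSeq a W₁ ∧ IsDyckSeq (n - 1 - a) W₂ := by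
  have hcount := hG.count_firstReturn (by omega)
  rw [hret, count_glueSeq_two_mul_add_two] at hcount
  refine ⟨⟨fun m hm => ?_, by omega⟩, ⟨fun j hj => ?_, ?_⟩⟩
  · have := hG.lt_two_mul_count (by omega) (t := m + 1) (by omega) (by omega)
    rw [count_glueSeq_succ hm] at this
    omega
  · have := hG.1 (2 * a + 2 + j) (by omega)
    rw [count_glueSeq_two_mul_add_two_add] at this
    omega
  · have := hG.2
    rw [show 2 * n = 2 * a + 2 + 2 * (n - 1 - a) by omega,
      count_glueSeq_two_mul_add_two_add] at this
    omega

end GlueDyck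

def pathSeq (n : ℕ) (w : Fin (2 * n) → Bool) (m : ℕ) : Bool :=
  if h : m < 2 * n then w ⟨m, h⟩ else false

lemma upCount_eq_count (n : ℕ) (w : Fin (2 * n) → Bool) (m : ℕ) :
    upCount n w m = Nat.count (pathSeq n w · = true) m := by
  rw [Nat.count_eq_card_filter_range, upCount, ← card_map Fin.valEmbedding]
  congr 1
  ext i
  simp only [mem_map, mem_filter, mem_univ, true_and, Fin.valEmbedding_apply, mem_range]
  constructor
  · rintro ⟨p, ⟨hpm, hp⟩, rfl⟩
    simpa [pathSeq] using ⟨hpm, hp⟩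
  · rintro ⟨him, hi⟩
    by_cases h : i < 2 * n
    · exact ⟨⟨i, h⟩, ⟨him, by simpa [pathSeq, h] using hi⟩, rfl⟩
    · simp [pathSeq, h] at hi

lemma isDyckPath_iff {n : ℕ} {w : Fin (2 * n) → Bool} :
    IsDyckPath n w ↔ IsDyckSeq n (pathSeq n w) := by
  simp only [IsDyckPath, IsDyckSeq, upCount_eq_count]

lemma mem_dyckPaths {n : ℕ} {w : Fin (2 * n) → Bool} :
    w ∈ dyckPaths n ↔ IsDyckSeq n (pathSeq n w) := by
  simp [dyckPaths, isDyckPath_iff]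

def glue (n a : ℕ) (w₁ : Fin (2 * a) → Bool) (w₂ : Fin (2 * (n - 1 - a)) → Bool) :
    Fin (2 * n) → Bool :=
  fun p => glueSeq a (pathSeq a w₁) (pathSeq (n - 1 - a) w₂) p

def inner (n a : ℕ) (w : Fin (2 * n) → Bool) : Fin (2 * a) → Bool :=
  fun p => pathSeq n w (p + 1)

def outer (n a : ℕ) (w : Fin (2 * n) → Bool) : Fin (2 * (n - 1 - a)) → Bool :=
  fun p => pathSeq n w (2 * a + 2 + p)

section Paths

variable {n a : ℕ}

lemma pathSeq_glue (ha : a < n) (w₁ : Fin (2 * a) → Bool) (w₂ : Fin (2 * (n - 1 - a)) → Bool) :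
    pathSeq n (glue n a w₁ w₂) = glueSeq a (pathSeq a w₁) (pathSeq (n - 1 - a) w₂) := by
  funext m
  by_cases hm : m < 2 * n
  · simp [pathSeq, glue, hm]
  · obtain ⟨j, rfl⟩ := Nat.exists_eq_add_of_le (show 2 * a + 2 ≤ m by omega)
    rw [glueSeq_two_mul_add_two_add]
    simp [pathSeq, hm, show ¬ j < 2 * (n - 1 - a) by omega]

lemma inner_glue (ha : a < n) (w₁ : Fin (2 * a) → Bool) (w₂ : Fin (2 * (n - 1 - a)) → Bool) :
    inner n a (glue n a w₁ w₂) = w₁ := by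
  funext p
  rw [inner, pathSeq_glue ha, glueSeq_succ_of_lt p.isLt]
  simp [pathSeq]

lemma outer_glue (ha : a < n) (w₁ : Fin (2 * a) → Bool) (w₂ : Fin (2 * (n - 1 - a)) → Bool) :
    outer n a (glue n a w₁ w₂) = w₂ := by
  funext p
  rw [outer, pathSeq_glue ha, glueSeq_two_mul_add_two_add]
  simp [pathSeq]

@[simp]
lemma pathSeq_coe (w : Fin (2 * n) → Bool) (p : Fin (2 * n)) : pathSeq n w p = w p := by
  simp [pathSeq]

lemma glue_inner_outer (ha : a < n) {w : Fin (2 * n) → Bool} (hw : IsDyckSeq n (pathSeq n w))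
    (hret : firstReturn (pathSeq n w) = a) : glue n a (inner n a w) (outer n a w) = w := by
  suffices h : pathSeq n (glue n a (inner n a w) (outer n a w)) = pathSeq n w by
    funext p
    simpa using congrFun h p
  rw [pathSeq_glue ha]
  funext m
  rcases m with _ | m
  · exact (hw.apply_zero (by omega)).symm
  rcases lt_trichotomy m (2 * a) with hm | rfl | hm
  · simp [glueSeq_succ_of_lt hm, pathSeq, inner, hm]
  · rw [glueSeq_two_mul_add_one, ← hret, hw.apply_two_mul_firstReturn_add_one (by omega)]
  · obtain ⟨j, rfl⟩ := Nat.exists_eq_add_of_le (show 2 * a + 1 ≤ m by omega)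
    rw [show 2 * a + 1 + j + 1 = 2 * a + 2 + j by omega, glueSeq_two_mul_add_two_add]
    by_cases hj : j < 2 * (n - 1 - a)
    · simp [pathSeq, outer, hj]
    · simp [pathSeq, hj, show ¬ 2 * a + 2 + j < 2 * n by omega]

end Paths

lemma sum_dyckPaths_eq_sum_glue {M : Type*} [AddCommMonoid M] {n : ℕ} (hn : 1 ≤ n)
    (φ : (Fin (2 * n) → Bool) → M) :
    ∑ w ∈ dyckPaths n, φ w =
      ∑ a ∈ range n, ∑ p ∈ dyckPaths a ×ˢ dyckPaths (n - 1 - a), φ (glue n a p.1 p.2) := by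
  rw [← sum_fiberwise_of_maps_to (g := fun w => firstReturn (pathSeq n w)) (t := range n)
    fun w hw => mem_range.2 ((mem_dyckPaths.1 hw).firstReturn_lt hn)]
  refine sum_congr rfl fun a ha => ?_
  have han := mem_range.1 ha
  refine sum_nbij' (fun w => (inner n a w, outer n a w)) (fun p => glue n a p.1 p.2)
    (fun w hw => ?_) (fun p hp => ?_) (fun w hw => ?_) (fun p _ => ?_) (fun w hw => ?_)
  · simp only [mem_filter, mem_dyckPaths] at hw
    have h := congrArg (pathSeq n) (glue_inner_outer han hw.1 hw.2)
    rw [pathSeq_glue han] at h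
    rw [← h] at hw
    simpa only [mem_product, mem_dyckPaths] using hw.1.of_glueSeq han hw.2
  · simp only [mem_product, mem_dyckPaths] at hp
    simpa only [mem_filter, mem_dyckPaths, pathSeq_glue han]
      using ⟨isDyckSeq_glueSeq han hp.1 hp.2, firstReturn_glueSeq hp.1⟩
  · simp only [mem_filter, mem_dyckPaths] at hw
    exact glue_inner_outer han hw.1 hw.2
  · exact Prod.ext (inner_glue han _ _) (outer_glue han _ _)
  · simp only [mem_filter, mem_dyckPaths] at hw
    rw [glue_inner_outer han hw.1 hw.2]

lemma card_dyckPaths (n : ℕ) : #(dyckPaths n) = catalan n := by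
  induction n using Nat.strong_induction_on with
  | _ n ih =>
    rcases n with _ | n
    · have huniv : dyckPaths 0 = univ := eq_univ_of_forall fun w =>
        mem_dyckPaths.2 ⟨fun m hm => by simp [Nat.le_zero.1 hm], by simp⟩
      simp [huniv]
    rw [card_eq_sum_ones, sum_dyckPaths_eq_sum_glue (by omega), catalan_succ,
      Fin.sum_univ_eq_sum_range (fun i => catalan i * catalan (n - i))]
    refine sum_congr rfl fun a ha => ?_
    have ha := mem_range.1 ha
    rw [← card_eq_sum_ones, card_product, ih a (by omega), Nat.add_sub_cancel,
      ih (n - a) (by omega)]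

section Contacts

def contacts (W : ℕ → Bool) (N k : ℕ) : Finset ℕ :=
  {m ∈ range (N + 1) | Nat.count (W · = true) m + k = m}

lemma mem_contacts {W : ℕ → Bool} {N k m : ℕ} :
    m ∈ contacts W N k ↔ m ≤ N ∧ Nat.count (W · = true) m + k = m := by
  simp [contacts]

lemma alpha_eq_card_contacts (n : ℕ) (w : Fin (2 * n) → Bool) (k : ℕ) :
    alpha n w k = #(contacts (pathSeq n w) (2 * n) k) - 1 := by
  simp only [alpha, contacts, upCount_eq_count]

variable {n a k N m : ℕ} {W₁ W₂ : ℕ → Bool}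

lemma mem_Icc_of_mem_contacts_glueSeq (h₁ : IsDyckSeq a W₁) (hk : 1 ≤ k) (hka : k ≤ a)
    (hm : m ∈ contacts (glueSeq a W₁ W₂) N k) : m ∈ Set.Icc 1 (2 * a + 1) := by
  rw [mem_contacts] at hm
  refine ⟨Nat.one_le_iff_ne_zero.2 ?_, not_lt.1 fun hlt => ?_⟩
  · rintro rfl
    simp at hm
    omega
  · obtain ⟨j, rfl⟩ := Nat.exists_eq_add_of_le (show 2 * a + 2 ≤ m by omega)
    rw [count_glueSeq_two_mul_add_two_add, h₁.2] at hm
    have := Nat.count_le (p := (W₂ · = true)) (n := j)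
    omega

lemma two_mul_add_two_le_of_mem_contacts_glueSeq (h₁ : IsDyckSeq a W₁) (hak : a < k)
    (hm : m ∈ contacts (glueSeq a W₁ W₂) N k) : 2 * a + 2 ≤ m := by
  rw [mem_contacts] at hm
  by_contra hlt
  rcases m with _ | m
  · simp at hm
    omega
  have hc := hm.2
  rw [count_glueSeq_succ (by omega)] at hc
  have hdyck := h₁.1 m (by omega)
  have hmono := Nat.count_monotone (W₁ · = true) (show m ≤ 2 * a by omega)
  rw [h₁.2] at hmono
  omega

lemma card_contacts_glueSeq_of_le (h₁ : IsDyckSeq a W₁) (hk : 1 ≤ k) (hka : k ≤ a) (ha : a < n) :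
    #(contacts (glueSeq a W₁ W₂) (2 * n) k) = #(contacts W₁ (2 * a) k) := by
  refine card_nbij' (· - 1) (· + 1) (fun m hm => ?_) (fun m hm => ?_) (fun m hm => ?_)
    (fun m _ => rfl)
  · obtain ⟨hm₀, hm₁⟩ := mem_Icc_of_mem_contacts_glueSeq h₁ hk hka hm
    obtain ⟨m, rfl⟩ := Nat.exists_eq_add_of_le' hm₀
    simp only [mem_coe, mem_contacts, count_glueSeq_succ (show m ≤ 2 * a by omega),
      Nat.add_sub_cancel] at hm ⊢
    omega
  · simp only [mem_coe, mem_contacts] at hm ⊢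
    rw [count_glueSeq_succ hm.1]
    omega
  · have := (mem_Icc_of_mem_contacts_glueSeq h₁ hk hka hm).1
    simp only
    omega

lemma card_contacts_glueSeq_of_lt (h₁ : IsDyckSeq a W₁) (hak : a < k) (hkn : k ≤ n) :
    #(contacts (glueSeq a W₁ W₂) (2 * n) k) = #(contacts W₂ (2 * (n - 1 - a)) (k - 1 - a)) := by
  refine card_nbij' (· - (2 * a + 2)) (2 * a + 2 + ·) (fun m hm => ?_) (fun m hm => ?_)
    (fun m hm => ?_) (fun m _ => by simp)
  · obtain ⟨j, rfl⟩ :=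
      Nat.exists_eq_add_of_le (two_mul_add_two_le_of_mem_contacts_glueSeq h₁ hak hm)
    simp only [mem_coe, mem_contacts, count_glueSeq_two_mul_add_two_add, h₁.2,
      Nat.add_sub_cancel_left] at hm ⊢
    omega
  · simp only [mem_coe, mem_contacts, count_glueSeq_two_mul_add_two_add, h₁.2] at hm ⊢
    omega
  · have := two_mul_add_two_le_of_mem_contacts_glueSeq h₁ hak hm
    simp only
    omega

end Contacts

section Alpha

variable {n a k : ℕ} {w₁ : Fin (2 * a) → Bool} {w₂ : Fin (2 * (n - 1 - a)) → Bool}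

lemma alpha_self {w : Fin (2 * n) → Bool} (hw : IsDyckSeq n (pathSeq n w)) : alpha n w n = 0 := by
  have hsingle : contacts (pathSeq n w) (2 * n) n = {2 * n} := by
    ext m
    have := hw.1 m
    have := hw.2
    simp only [mem_contacts, mem_singleton]
    constructor
    · omega
    · rintro rfl
      omega
  rw [alpha_eq_card_contacts, hsingle, card_singleton]

lemma alpha_glue_of_le (ha : a < n) (h₁ : IsDyckSeq a (pathSeq a w₁)) (hk : 1 ≤ k) (hka : k ≤ a) :
    alpha n (glue n a w₁ w₂) k = alpha a w₁ k := by
  rw [alpha_eq_card_contacts, alpha_eq_card_contacts, pathSeq_glue ha,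
    card_contacts_glueSeq_of_le h₁ hk hka ha]

lemma alpha_glue_of_lt (ha : a < n) (h₁ : IsDyckSeq a (pathSeq a w₁)) (hak : a < k) (hkn : k ≤ n) :
    alpha n (glue n a w₁ w₂) k = alpha (n - 1 - a) w₂ (k - 1 - a) := by
  rw [alpha_eq_card_contacts, alpha_eq_card_contacts, pathSeq_glue ha,
    card_contacts_glueSeq_of_lt h₁ hak hkn]

end Alpha

lemma sum_glue_pow_alpha_of_le {n a k : ℕ} (ha : a < n) (hk : 1 ≤ k) (hka : k ≤ a) (z : ℝ) :
    ∑ p ∈ dyckPaths a ×ˢ dyckPaths (n - 1 - a), z ^ (alpha n (glue n a p.1 p.2) k + 1) =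
      calR a k z * catalan (n - 1 - a) := by
  calc _ = ∑ w₁ ∈ dyckPaths a, ∑ _w₂ ∈ dyckPaths (n - 1 - a), z ^ (alpha a w₁ k + 1) := by
        rw [sum_product]
        exact sum_congr rfl fun w₁ hw₁ => sum_congr rfl fun w₂ _ => by
          rw [alpha_glue_of_le ha (mem_dyckPaths.1 hw₁) hk hka]
    _ = calR a k z * catalan (n - 1 - a) := by
        rw [calR, sum_mul]
        exact sum_congr rfl fun w₁ _ => by rw [sum_const, card_dyckPaths, nsmul_eq_mul, mul_comm]

lemma sum_glue_pow_alpha_of_lt {n a k : ℕ} (ha : a < n) (hak : a < k) (hkn : k ≤ n) (z : ℝ) :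
    ∑ p ∈ dyckPaths a ×ˢ dyckPaths (n - 1 - a), z ^ (alpha n (glue n a p.1 p.2) k + 1) =
      catalan a * calR (n - 1 - a) (k - 1 - a) z := by
  calc _ = ∑ _w₁ ∈ dyckPaths a, calR (n - 1 - a) (k - 1 - a) z := by
        rw [sum_product]
        exact sum_congr rfl fun w₁ hw₁ => sum_congr rfl fun w₂ _ => by
          rw [alpha_glue_of_lt ha (mem_dyckPaths.1 hw₁) hak hkn]
    _ = catalan a * calR (n - 1 - a) (k - 1 - a) z := by
        rw [sum_const, card_dyckPaths, nsmul_eq_mul]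

end DyckPath

open DyckPath

/-- `𝓡_k^{(k)}(z) = C_k · z`, and for `n > k ≥ 1`,
`𝓡_n^{(k)}(z) = Σ_{i=k}^{n-1} 𝓡_i^{(k)}(z) · C_{n-1-i} + Σ_{l=0}^{k-1} C_{k-1-l} · 𝓡_{n-k+l}^{(l)}(z)`. -/
theorem calR_recursion :
    (∀ k : ℕ, ∀ z : ℝ, calR k k z = (catalan k : ℝ) * z) ∧
    ∀ n k : ℕ, 1 ≤ k → k < n → ∀ z : ℝ,
      calR n k z =
        (∑ i ∈ Finset.Ico k n, calR i k z * (catalan (n - 1 - i) : ℝ)) +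
        ∑ l ∈ Finset.range k, (catalan (k - 1 - l) : ℝ) * calR (n - k + l) l z := by
  refine ⟨fun k z => ?_, fun n k hk hkn z => ?_⟩
  · rw [calR, sum_congr rfl fun w hw => by rw [alpha_self (mem_dyckPaths.1 hw), zero_add, pow_one],
      sum_const, card_dyckPaths, nsmul_eq_mul]
  rw [calR, sum_dyckPaths_eq_sum_glue (by omega), ← sum_range_add_sum_Ico _ hkn.le, add_comm,
    sum_congr rfl fun a ha => sum_glue_pow_alpha_of_le (mem_Ico.1 ha).2 hk (mem_Ico.1 ha).1 z,
    sum_congr rfl fun a ha =>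
      sum_glue_pow_alpha_of_lt ((mem_range.1 ha).trans hkn) (mem_range.1 ha) hkn.le z,
    ← sum_range_reflect]
  refine congrArg _ (sum_congr rfl fun l hl => ?_)
  have hlk := mem_range.1 hl
  rw [show k - 1 - (k - 1 - l) = l by omega, show n - 1 - (k - 1 - l) = n - k + l by omega]
end

section
/- For every integer n ≥ 1, the conditional law of σ_0 given Δ_n equals the convolution of the conditional law of σ_1 given Δ_n with Exp(λ+μ): L[σ_0 | Δ_n] = L[σ_1 | Δ_n] ⋆ Exp(λ+μ). -/
/-!
Restricted to `{τ₀ < σ₀}`, the pair `(τ₀, σ₀ - τ₀)` has law `λ/(λ+μ) • Exp(λ+μ) ⊗ Exp(μ)`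
(memorylessness). For `n ≥ 1` the event `Δ_n` is `{τ₀ < σ₀}` intersected with a condition on
`(σ₀ - τ₀, σ₁, τ₁, τ₂, …, σ₂, σ₃, …)` that involves `σ₀ - τ₀` and `σ₁` only through their sum.
So on `Δ_n` the residual service time `σ₀ - τ₀` and `σ₁` are exchangeable, while
`σ₀ = τ₀ + (σ₀ - τ₀)` with `τ₀ ∼ Exp(λ+μ)` independent of everything else. Hence
`L[σ₀ | Δ_n] = Exp(λ+μ) ⋆ L[σ₀ - τ₀ | Δ_n] = Exp(λ+μ) ⋆ L[σ₁ | Δ_n]`.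
-/

open MeasureTheory ProbabilityTheory

open Set
open scoped ENNReal

namespace ProbabilityTheory

theorem iIndepFun.indepFun_set {Ω ι β : Type*} [MeasurableSpace Ω] [mβ : MeasurableSpace β]
    {μ : Measure Ω} {f : ι → Ω → β} (h : iIndepFun f μ) (hf : ∀ i, Measurable (f i))
    {S T : Set ι} (hST : Disjoint S T) :
    IndepFun (fun ω (i : S) => f i ω) (fun ω (i : T) => f i ω) μ := by
  have hle (U : Set ι) : MeasurableSpace.comap (fun ω (i : U) => f i ω) MeasurableSpace.pi
      ≤ ⨆ i ∈ U, MeasurableSpace.comap (f i) mβ := by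
    simp only [MeasurableSpace.pi, MeasurableSpace.comap_iSup, MeasurableSpace.comap_comp]
    exact iSup_le fun i => le_iSup₂_of_le i.1 i.2 le_rfl
  rw [IndepFun_iff_Indep]
  exact indep_of_indep_of_le_right (indep_of_indep_of_le_left
    (indep_iSup_of_disjoint (fun i => (hf i).comap_le) h.iIndep hST) (hle S)) (hle T)

theorem iIndepFun.indepFun_comp_pi_compl_singleton {Ω ι β γ : Type*} [MeasurableSpace Ω]
    [MeasurableSpace β] [MeasurableSpace γ] {μ : Measure Ω} {f : ι → Ω → β} (h : iIndepFun f μ)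
    (hf : ∀ i, Measurable (f i)) (i : ι) {ψ : (({i}ᶜ : Set ι) → β) → γ} (hψ : Measurable ψ) :
    IndepFun (f i) (fun ω => ψ fun j => f j ω) μ :=
  (h.indepFun_set hf (S := {i}) disjoint_compl_right).comp
    (measurable_pi_apply (⟨i, rfl⟩ : ({i} : Set ι))) hψ

end ProbabilityTheory

theorem MeasureTheory.MeasurePreserving.map_withDensity_comp {α β : Type*} [MeasurableSpace α]
    [MeasurableSpace β] {μ : Measure α} {ν : Measure β} {f : α → β}
    (hf : MeasurePreserving f μ ν) (he : MeasurableEmbedding f) (g : β → ℝ≥0∞) :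
    (μ.withDensity (g ∘ f)).map f = ν.withDensity g := by
  ext s hs
  rw [Measure.map_apply he.measurable hs, withDensity_apply _ (he.measurable hs),
    withDensity_apply _ hs]
  exact hf.setLIntegral_comp_preimage_emb he g s

theorem MeasureTheory.Measure.map_swap₁₂_prod_prod {α β : Type*} [MeasurableSpace α]
    [MeasurableSpace β] (μ : Measure α) (ν : Measure β) [SFinite μ] [SFinite ν] :
    (μ.prod (μ.prod ν)).map (fun q => (q.2.1, q.1, q.2.2)) = μ.prod (μ.prod ν) := by
  rw [← (measurePreserving_prodAssoc μ μ ν).map_eq,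
    Measure.map_map (by fun_prop) MeasurableEquiv.prodAssoc.measurable,
    show ((fun q : α × α × β => (q.2.1, q.1, q.2.2)) ∘ MeasurableEquiv.prodAssoc)
      = MeasurableEquiv.prodAssoc ∘ Prod.map Prod.swap id from rfl,
    ← Measure.map_map MeasurableEquiv.prodAssoc.measurable (measurable_swap.prodMap measurable_id),
    ← Measure.map_prod_map _ _ measurable_swap measurable_id, Measure.prod_swap, Measure.map_id]

namespace ProbabilityTheory

instance sFinite_expMeasure (r : ℝ) : SFinite (expMeasure r) := by
  unfold expMeasure gammaMeasure; infer_instance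

theorem ae_pos_expMeasure (r : ℝ) : ∀ᵐ x ∂expMeasure r, 0 < x := by
  rw [ae_iff, show {x : ℝ | ¬0 < x} = Iic 0 by ext; simp, expMeasure, gammaMeasure,
    withDensity_apply _ measurableSet_Iic, Measure.restrict_congr_set Iio_ae_eq_Iic.symm]
  exact lintegral_exponentialPDF_of_nonpos le_rfl

theorem expMeasure_prod_expMeasure_eq_withDensity (a b : ℝ) :
    (expMeasure a).prod (expMeasure b) = (volume.prod volume).withDensity
      (fun p : ℝ × ℝ => exponentialPDF a p.1 * exponentialPDF b p.2) :=
  prod_withDensity (measurable_exponentialPDFReal a).ennreal_ofReal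
    (measurable_exponentialPDFReal b).ennreal_ofReal

theorem exponentialPDF_mul_exponentialPDF_of_lt {lam mu x y : ℝ} (hlam : 0 < lam) (hmu : 0 < mu)
    (hxy : x < y) :
    exponentialPDF lam x * exponentialPDF mu y = ENNReal.ofReal (lam / (lam + mu)) *
      (exponentialPDF (lam + mu) x * exponentialPDF mu (y - x)) := by
  rcases lt_or_ge x 0 with hx | hx
  · simp [exponentialPDF_of_neg hx]
  rw [exponentialPDF_of_nonneg hx, exponentialPDF_of_nonneg (hx.trans hxy.le),
    exponentialPDF_of_nonneg hx, exponentialPDF_of_nonneg (sub_nonneg.2 hxy.le),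
    ← ENNReal.ofReal_mul (by positivity), ← ENNReal.ofReal_mul (by positivity),
    ← ENNReal.ofReal_mul (by positivity)]
  congr 1
  have hexp : Real.exp (-(lam * x)) * Real.exp (-(mu * y))
      = Real.exp (-((lam + mu) * x)) * Real.exp (-(mu * (y - x))) := by
    rw [← Real.exp_add, ← Real.exp_add]; ring_nf
  calc lam * Real.exp (-(lam * x)) * (mu * Real.exp (-(mu * y)))
      = lam * mu * (Real.exp (-(lam * x)) * Real.exp (-(mu * y))) := by ring
    _ = _ := by rw [hexp]; field_simp

theorem expMeasure_prod_restrict_fst_lt_snd {lam mu : ℝ} (hlam : 0 < lam) (hmu : 0 < mu) :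
    ((expMeasure lam).prod (expMeasure mu)).restrict {p | p.1 < p.2}
      = ENNReal.ofReal (lam / (lam + mu)) •
          ((expMeasure (lam + mu)).prod (expMeasure mu)).map (fun p => (p.1, p.1 + p.2)) := by
  set G : ℝ × ℝ → ℝ≥0∞ := fun q => exponentialPDF (lam + mu) q.1 * exponentialPDF mu (q.2 - q.1)
  have hA : MeasurableSet {p : ℝ × ℝ | p.1 < p.2} := measurableSet_lt measurable_fst measurable_snd
  have hG : (fun p : ℝ × ℝ => exponentialPDF (lam + mu) p.1 * exponentialPDF mu p.2)
      = G ∘ fun p => (p.1, p.1 + p.2) := by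
    funext p; simp [G]
  rw [expMeasure_prod_expMeasure_eq_withDensity, expMeasure_prod_expMeasure_eq_withDensity, hG,
    (measurePreserving_prod_add volume volume).map_withDensity_comp
      (MeasurableEquiv.shearAddRight ℝ).measurableEmbedding,
    ← withDensity_smul' _ G ENNReal.ofReal_ne_top, restrict_withDensity hA,
    ← withDensity_indicator hA]
  refine withDensity_congr_ae ?_
  have hdiag : ∀ᵐ p ∂(volume.prod volume : Measure (ℝ × ℝ)), p.1 ≠ p.2 :=
    (Measure.ae_prod_mem_iff_ae_ae_mem
      (measurableSet_eq_fun measurable_fst measurable_snd).compl).2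
      (ae_of_all _ fun x => (volume.ae_ne x).mono fun _ h => Ne.symm h)
  filter_upwards [hdiag] with p hp
  rcases hp.lt_or_gt with h | h
  · simp [indicator_of_mem (show p ∈ {p : ℝ × ℝ | p.1 < p.2} from h), G,
      exponentialPDF_mul_exponentialPDF_of_lt hlam hmu h]
  · simp [indicator_of_notMem (show p ∉ {p : ℝ × ℝ | p.1 < p.2} from h.not_gt), G,
      exponentialPDF_of_neg (sub_neg.2 h)]

theorem expMeasure_prod_prod_restrict_fst_lt {β : Type*} [MeasurableSpace β] {lam mu : ℝ}
    (hlam : 0 < lam) (hmu : 0 < mu) (ρ : Measure β) [SFinite ρ] :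
    ((expMeasure lam).prod ((expMeasure mu).prod ρ)).restrict {x | x.1 < x.2.1}
      = ENNReal.ofReal (lam / (lam + mu)) •
          ((expMeasure (lam + mu)).prod ((expMeasure mu).prod ρ)).map
            (fun y => (y.1, y.1 + y.2.1, y.2.2)) := by
  have hassoc (a : ℝ) : (expMeasure a).prod ((expMeasure mu).prod ρ)
      = (((expMeasure a).prod (expMeasure mu)).prod ρ).map MeasurableEquiv.prodAssoc :=
    (measurePreserving_prodAssoc _ _ _).map_eq.symm
  have hshear : Measurable fun p : ℝ × ℝ => (p.1, p.1 + p.2) := by fun_prop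
  have hA : MeasurableSet {x : ℝ × ℝ × β | x.1 < x.2.1} :=
    measurableSet_lt measurable_fst (measurable_fst.comp measurable_snd)
  have hprod : (((expMeasure (lam + mu)).prod (expMeasure mu)).map
        (fun p => (p.1, p.1 + p.2))).prod ρ
      = (((expMeasure (lam + mu)).prod (expMeasure mu)).prod ρ).map
          (Prod.map (fun p => (p.1, p.1 + p.2)) id) := by
    rw [← Measure.map_prod_map _ _ hshear measurable_id, Measure.map_id]
  rw [hassoc, hassoc, Measure.restrict_map MeasurableEquiv.prodAssoc.measurable hA,
    Measure.map_map (by fun_prop) MeasurableEquiv.prodAssoc.measurable,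
    show MeasurableEquiv.prodAssoc ⁻¹' {x : ℝ × ℝ × β | x.1 < x.2.1}
      = {p : ℝ × ℝ | p.1 < p.2} ×ˢ univ by ext; simp [MeasurableEquiv.prodAssoc],
    ← Measure.restrict_prod_eq_prod_univ, expMeasure_prod_restrict_fst_lt_snd hlam hmu,
    Measure.prod_smul_left, Measure.map_smul, hprod,
    Measure.map_map MeasurableEquiv.prodAssoc.measurable (hshear.prodMap measurable_id)]
  rfl

theorem map_restrict_eq_conv_expMeasure {γ : Type*} [MeasurableSpace γ] {lam mu : ℝ}
    (hlam : 0 < lam) (hmu : 0 < mu) (ν : Measure γ) [SFinite ν] {B : Set (ℝ × ℝ × γ)}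
    (hB : MeasurableSet B) (hB_symm : ∀ u s w, (u, s, w) ∈ B ↔ (s, u, w) ∈ B) :
    (((expMeasure lam).prod ((expMeasure mu).prod ((expMeasure mu).prod ν))).restrict
        {x | x.1 < x.2.1 ∧ (x.2.1 - x.1, x.2.2) ∈ B}).map (fun x => x.2.1)
      = ((((expMeasure lam).prod ((expMeasure mu).prod ((expMeasure mu).prod ν))).restrict
        {x | x.1 < x.2.1 ∧ (x.2.1 - x.1, x.2.2) ∈ B}).map (fun x => x.2.2.1)).conv
          (expMeasure (lam + mu)) := by
  have := isProbabilityMeasure_expMeasure (add_pos hlam hmu)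
  set ρ := (expMeasure mu).prod ((expMeasure mu).prod ν)
  set D := {x : ℝ × ℝ × ℝ × γ | x.1 < x.2.1 ∧ (x.2.1 - x.1, x.2.2) ∈ B}
  set E := expMeasure (lam + mu)
  set η := ρ.restrict B
  set Φ : ℝ × ℝ × ℝ × γ → ℝ × ℝ × ℝ × γ := fun y => (y.1, y.1 + y.2.1, y.2.2)
  set swap₁₂ : ℝ × ℝ × γ → ℝ × ℝ × γ := fun q => (q.2.1, q.1, q.2.2)
  have hΦ : Measurable Φ := by fun_prop
  have hD : MeasurableSet D :=
    (measurableSet_lt measurable_fst (measurable_fst.comp measurable_snd)).inter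
      (hB.preimage (by fun_prop))
  have hη_pos : ρ.restrict ({q | 0 < q.1} ∩ B) = η :=
    Measure.restrict_congr_set <| inter_ae_eq_right_of_ae_eq_univ <| ae_eq_univ.2 <|
      Measure.quasiMeasurePreserving_fst.ae (ae_pos_expMeasure mu)
  have hη_swap : η.map swap₁₂ = η := by
    have hB' : swap₁₂ ⁻¹' B = B := by ext; exact (hB_symm _ _ _).symm
    calc η.map swap₁₂ = (ρ.restrict (swap₁₂ ⁻¹' B)).map swap₁₂ := by rw [hB']
      _ = (ρ.map swap₁₂).restrict B := (Measure.restrict_map (by fun_prop) hB).symm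
      _ = η := by rw [Measure.map_swap₁₂_prod_prod]
  have hM : ((expMeasure lam).prod ρ).restrict D
      = ENNReal.ofReal (lam / (lam + mu)) • (E.prod η).map Φ := by
    rw [← inter_eq_left.2 (show D ⊆ {x | x.1 < x.2.1} from fun x hx => hx.1),
      ← Measure.restrict_restrict hD, expMeasure_prod_prod_restrict_fst_lt hlam hmu,
      Measure.restrict_smul, Measure.restrict_map hΦ hD,
      show Φ ⁻¹' D = univ ×ˢ ({q | 0 < q.1} ∩ B) by ext; simp [Φ, D],
      ← Measure.prod_restrict, Measure.restrict_univ, hη_pos]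
  have hfst : (E.prod η).map (fun y => y.1 + y.2.1) = E.conv (η.map Prod.fst) := by
    have : E.prod (η.map Prod.fst) = (E.prod η).map (Prod.map id Prod.fst) := by
      rw [← Measure.map_prod_map _ _ measurable_id measurable_fst, Measure.map_id]
    rw [Measure.conv, this, Measure.map_map (by fun_prop) (by fun_prop)]
    rfl
  have hsnd : (E.prod η).map (fun y => y.2.2.1) = η.map Prod.fst := by
    change (E.prod η).map ((fun q : ℝ × ℝ × γ => q.2.1) ∘ Prod.snd) = _
    rw [← Measure.map_map (by fun_prop) measurable_snd, Measure.map_snd_prod, measure_univ,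
      one_smul]
    conv_lhs => rw [← hη_swap]
    rw [Measure.map_map (by fun_prop) (by fun_prop)]
    rfl
  rw [hM, Measure.map_smul, Measure.map_smul, Measure.map_map (by fun_prop) hΦ,
    Measure.map_map (by fun_prop) hΦ, Measure.conv_smul_left,
    show (fun x => x.2.1) ∘ Φ = fun y => y.1 + y.2.1 from rfl,
    show (fun x => x.2.2.1) ∘ Φ = fun y => y.2.2.1 from rfl, hfst, hsnd, Measure.conv_comm]

theorem map_restrict_eq_conv_expMeasure_of_indepFun {Ω γ : Type*} [MeasurableSpace Ω]
    [MeasurableSpace γ] {P : Measure Ω} [IsProbabilityMeasure P] {lam mu : ℝ}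
    (hlam : 0 < lam) (hmu : 0 < mu) {T S₀ S₁ : Ω → ℝ} {W : Ω → γ} (hT : Measurable T)
    (hS₀ : Measurable S₀) (hS₁ : Measurable S₁) (hW : Measurable W)
    (hT_indep : IndepFun T (fun ω => (S₀ ω, S₁ ω, W ω)) P)
    (hS₀_indep : IndepFun S₀ (fun ω => (S₁ ω, W ω)) P) (hS₁_indep : IndepFun S₁ W P)
    (hT_law : P.map T = expMeasure lam) (hS₀_law : P.map S₀ = expMeasure mu)
    (hS₁_law : P.map S₁ = expMeasure mu) {B : Set (ℝ × ℝ × γ)} (hB : MeasurableSet B)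
    (hB_symm : ∀ u s w, (u, s, w) ∈ B ↔ (s, u, w) ∈ B) :
    (P.restrict {ω | T ω < S₀ ω ∧ (S₀ ω - T ω, S₁ ω, W ω) ∈ B}).map S₀
      = ((P.restrict {ω | T ω < S₀ ω ∧ (S₀ ω - T ω, S₁ ω, W ω) ∈ B}).map S₁).conv
          (expMeasure (lam + mu)) := by
  set X : Ω → ℝ × ℝ × ℝ × γ := fun ω => (T ω, S₀ ω, S₁ ω, W ω)
  have hX : Measurable X := by fun_prop
  have hlaw : P.map X
      = (expMeasure lam).prod ((expMeasure mu).prod ((expMeasure mu).prod (P.map W))) := by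
    rw [hT_indep.map_prod_eq_prod_map_map hT.aemeasurable (by fun_prop),
      hS₀_indep.map_prod_eq_prod_map_map hS₀.aemeasurable (by fun_prop),
      hS₁_indep.map_prod_eq_prod_map_map hS₁.aemeasurable hW.aemeasurable,
      hT_law, hS₀_law, hS₁_law]
  have hD : MeasurableSet {x : ℝ × ℝ × ℝ × γ | x.1 < x.2.1 ∧ (x.2.1 - x.1, x.2.2) ∈ B} :=
    (measurableSet_lt measurable_fst (measurable_fst.comp measurable_snd)).inter
      (hB.preimage (f := fun x : ℝ × ℝ × ℝ × γ => (x.2.1 - x.1, x.2.2)) (by fun_prop))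
  have key := map_restrict_eq_conv_expMeasure hlam hmu (P.map W) hB hB_symm
  rw [← hlaw, Measure.restrict_map hX hD, Measure.map_map (by fun_prop) hX,
    Measure.map_map (by fun_prop) hX] at key
  exact key

/-- `Δ_{m+1}` in the coordinates `(σ₀ - τ₀, σ₁, (τ_{j+1})_j, (σ_{j+2})_j)`, on `{τ₀ < σ₀}`
(see `busyDelta_succ`). Only the sum of the first two coordinates enters. -/
def busyDeltaTail (m : ℕ) : Set (ℝ × ℝ × (ℕ → ℝ) × (ℕ → ℝ)) :=
  {q | (∀ k < m, ∑ j ∈ Finset.range (k + 1), q.2.2.1 j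
        < q.1 + q.2.1 + ∑ j ∈ Finset.range k, q.2.2.2 j) ∧
      q.1 + q.2.1 + ∑ j ∈ Finset.range m, q.2.2.2 j ≤ ∑ j ∈ Finset.range (m + 1), q.2.2.1 j}

theorem measurableSet_busyDeltaTail (m : ℕ) : MeasurableSet (busyDeltaTail m) := by
  unfold busyDeltaTail
  measurability

theorem busyDeltaTail_symm (m : ℕ) (u s : ℝ) (w : (ℕ → ℝ) × (ℕ → ℝ)) :
    (u, s, w) ∈ busyDeltaTail m ↔ (s, u, w) ∈ busyDeltaTail m := by
  simp only [busyDeltaTail, mem_ofPred_eq, add_comm u s]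

theorem busyDelta_succ {Ω : Type*} (τ σ : ℕ → Ω → ℝ) (m : ℕ) :
    busyDelta τ σ (m + 1) = {ω | τ 0 ω < σ 0 ω ∧
      (σ 0 ω - τ 0 ω, σ 1 ω, fun j => τ (j + 1) ω, fun j => σ (j + 2) ω) ∈ busyDeltaTail m} := by
  ext ω
  simp only [busyDelta, busyDeltaTail, mem_ofPred_eq, Nat.forall_lt_succ_left,
    Finset.sum_range_succ', Finset.range_zero, Finset.sum_empty, zero_add, and_assoc]
  refine and_congr Iff.rfl (and_congr (forall₂_congr fun k _ => ?_) ?_) <;>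
    constructor <;> intro h <;> linarith

end ProbabilityTheory

/-- for `n ≥ 1`, `L[σ_0 | Δ_n] = L[σ_1 | Δ_n] ⋆ Exp(λ+μ)`. -/
theorem condLaw_first_eq_second_conv_exp
    {Ω : Type*} [MeasurableSpace Ω] (P : Measure Ω) [IsProbabilityMeasure P]
    (lam mu : ℝ) (hlam : 0 < lam) (hmu : 0 < mu)
    (τ σ : ℕ → Ω → ℝ)
    (hτm : ∀ j, Measurable (τ j)) (hσm : ∀ j, Measurable (σ j))
    (hindep : iIndepFun (Sum.elim τ σ) P)
    (hτ : ∀ j, P.map (τ j) = expMeasure lam)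
    (hσ : ∀ j, P.map (σ j) = expMeasure mu)
    (n : ℕ) (hn : 1 ≤ n) :
    (P[|busyDelta τ σ n]).map (σ 0)
      = ((P[|busyDelta τ σ n]).map (σ 1)).conv (expMeasure (lam + mu)) := by
  obtain ⟨m, rfl⟩ : ∃ m, n = m + 1 := ⟨n - 1, by omega⟩
  have hf : ∀ i, Measurable (Sum.elim τ σ i) := Sum.forall.2 ⟨hτm, hσm⟩
  set W : Ω → (ℕ → ℝ) × (ℕ → ℝ) := fun ω => (fun j => τ (j + 1) ω, fun j => σ (j + 2) ω)
  have hT : IndepFun (τ 0) (fun ω => (σ 0 ω, σ 1 ω, W ω)) P :=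
    hindep.indepFun_comp_pi_compl_singleton hf (.inl 0)
      (ψ := fun v => (v ⟨.inr 0, by simp⟩, v ⟨.inr 1, by simp⟩,
        fun j => v ⟨.inl (j + 1), by simp⟩, fun j => v ⟨.inr (j + 2), by simp⟩)) (by fun_prop)
  have hS₀ : IndepFun (σ 0) (fun ω => (σ 1 ω, W ω)) P :=
    hindep.indepFun_comp_pi_compl_singleton hf (.inr 0)
      (ψ := fun v => (v ⟨.inr 1, by simp⟩,
        fun j => v ⟨.inl (j + 1), by simp⟩, fun j => v ⟨.inr (j + 2), by simp⟩)) (by fun_prop)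
  have hS₁ : IndepFun (σ 1) W P :=
    hindep.indepFun_comp_pi_compl_singleton hf (.inr 1)
      (ψ := fun v => (fun j => v ⟨.inl (j + 1), by simp⟩, fun j => v ⟨.inr (j + 2), by simp⟩))
      (by fun_prop)
  rw [ProbabilityTheory.cond, busyDelta_succ, Measure.map_smul, Measure.map_smul,
    Measure.conv_smul_left,
    map_restrict_eq_conv_expMeasure_of_indepFun hlam hmu (hτm 0) (hσm 0) (hσm 1) (by fun_prop)
      hT hS₀ hS₁ (hτ 0) (hσ 0) (hσ 1) (measurableSet_busyDeltaTail m) (busyDeltaTail_symm m)]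
end

section
/- For every integer n ≥ 1, the polynomial identity 𝓡_n^{(0)}(z) = z · 𝓡_n^{(1)}(z) holds; equivalently, Σ_{π∈𝒟_n} z^{α_0(π)+1} = z · Σ_{π∈𝒟_n} z^{α_1(π)+1}. (This follows from an explicit involution on 𝒟_n exchanging the roles of the lines y = x and y = x − 2.) -/
/-!
Let `d₀ < d₁ < ⋯` be the positions of the down steps of a path. The path meets the line
`y = x - 2j` exactly at the times preceded by `j` down steps, so `α₀ = d₀` and
`α_{j+1} + 1 = d_{j+1} - d_j`. Exchanging the first two gaps `d₀` and `d₁ - d₀` keeps a Dyck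
path a Dyck path (it starts with an up step, so `d₀ ≥ 1`), is an involution of `𝒟_n`, and
turns `α₀ = d₀` into `α₁ + 1`.
-/

open Finset

namespace Nat

variable {p : ℕ → Prop}

lemma eq_nth_zero_of_lt_nth_one {a : ℕ} (ha : p a) (h : a < nth p 1) : a = nth p 0 :=
  (le_nth_of_lt_nth_succ h ha).antisymm (nth_zero (p := p) ▸ Nat.sInf_le ha)

variable [DecidablePred p]

lemma count_eq_zero_iff_le_nth_zero (hp : (Set.ofPred p).Infinite) {m : ℕ} :
    count p m = 0 ↔ m ≤ nth p 0 := by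
  rw [← Nat.le_zero, count_le_iff_le_nth hp]

lemma count_eq_succ_iff (hp : (Set.ofPred p).Infinite) {m j : ℕ} :
    count p m = j + 1 ↔ nth p j < m ∧ m ≤ nth p (j + 1) := by
  rw [← lt_nth_iff_count_lt hp, ← count_le_iff_le_nth hp]
  omega

lemma card_filter_count_eq_zero (hp : (Set.ofPred p).Infinite) {N : ℕ} (hN : nth p 0 ≤ N) :
    #{m ∈ range (N + 1) | count p m = 0} = nth p 0 + 1 := by
  rw [← card_range (nth p 0 + 1)]
  congr 1
  ext m
  simp only [mem_filter, mem_range, count_eq_zero_iff_le_nth_zero hp]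
  omega

lemma card_filter_count_eq_succ (hp : (Set.ofPred p).Infinite) {N j : ℕ}
    (hN : nth p (j + 1) ≤ N) :
    #{m ∈ range (N + 1) | count p m = j + 1} = nth p (j + 1) - nth p j := by
  rw [← card_Ioc]
  congr 1
  ext m
  simp only [mem_filter, mem_range, mem_Ioc, count_eq_succ_iff hp]
  omega

lemma nth_zero_eq_and_nth_one_eq {k l : ℕ} (hk : p k) (hl : p l) (hkl : k < l)
    (h : ∀ i < l, p i → i = k) : nth p 0 = k ∧ nth p 1 = l := by
  have hk0 : count p k = 0 :=
    count_iff_forall_not.2 fun i hi hpi => (h i (hi.trans hkl) hpi ▸ hi).false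
  have hl1 : count p l = 1 := by
    rw [count_eq_card_filter_range, card_eq_one]
    refine ⟨k, ext fun i => ?_⟩
    simp only [mem_filter, mem_range, mem_singleton]
    exact ⟨fun hi => h i hi.1 hi.2, by rintro rfl; exact ⟨hkl, hk⟩⟩
  exact ⟨hk0 ▸ nth_count hk, hl1 ▸ nth_count hl⟩

lemma count_eq_count_of_forall_ge {q : ℕ → Prop} [DecidablePred q] {b m : ℕ}
    (hb : count p b = count q b) (hpq : ∀ i ≥ b, (p i ↔ q i)) (hm : b ≤ m) :
    count p m = count q m := by
  obtain ⟨k, rfl⟩ := exists_add_of_le hm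
  rw [count_add, count_add, hb]
  congr 1
  simp_rw [hpq _ (le_add_right b _)]

end Nat

-- Padding with down steps makes the set of down positions infinite, as `Nat.nth` needs.
def stepAt (n : ℕ) (w : Fin (2 * n) → Bool) (m : ℕ) : Bool :=
  if h : m < 2 * n then w ⟨m, h⟩ else false

abbrev IsDownAt (n : ℕ) (w : Fin (2 * n) → Bool) (m : ℕ) : Prop :=
  stepAt n w m = false

open Nat

section Paths

variable {n : ℕ} {w : Fin (2 * n) → Bool}

lemma mem_dyckPaths : w ∈ dyckPaths n ↔ IsDyckPath n w := by
  classical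
  simp [dyckPaths]

lemma isDownAt_of_le (n : ℕ) (w : Fin (2 * n) → Bool) {m : ℕ} (hm : 2 * n ≤ m) :
    IsDownAt n w m := by
  simp [IsDownAt, stepAt, not_lt.2 hm]

lemma infinite_isDownAt : (Set.ofPred (IsDownAt n w)).Infinite :=
  Set.infinite_of_forall_exists_gt fun a =>
    ⟨max a (2 * n) + 1, isDownAt_of_le n w (by omega), by omega⟩

lemma upCount_eq_count (m : ℕ) (hm : m ≤ 2 * n) :
    upCount n w m = count (fun p => stepAt n w p = true) m := by
  rw [upCount, count_eq_card_filter_range, ← card_map Fin.valEmbedding]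
  congr 1
  ext p
  simp only [mem_map, mem_filter, mem_univ, true_and, Fin.valEmbedding_apply, mem_range]
  constructor
  · rintro ⟨p, ⟨hpm, hp⟩, rfl⟩
    simpa [stepAt, p.isLt] using ⟨hpm, hp⟩
  · rintro ⟨hpm, hp⟩
    have hpn : p < 2 * n := by omega
    exact ⟨⟨p, hpn⟩, ⟨hpm, by simpa [stepAt, hpn] using hp⟩, rfl⟩

lemma upCount_add_count_isDownAt {m : ℕ} (hm : m ≤ 2 * n) :
    upCount n w m + count (IsDownAt n w) m = m := by
  rw [upCount_eq_count m hm, count_eq_card_filter_range, count_eq_card_filter_range]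
  simp only [IsDownAt, Bool.eq_false_iff, ne_eq]
  rw [card_filter_add_card_filter_not, card_range]

lemma nth_isDownAt_zero_lt_one : nth (IsDownAt n w) 0 < nth (IsDownAt n w) 1 :=
  (nth_lt_nth infinite_isDownAt).2 zero_lt_one

lemma alpha_eq_card_filter_count (j : ℕ) :
    alpha n w j = #{m ∈ range (2 * n + 1) | count (IsDownAt n w) m = j} - 1 := by
  rw [alpha]
  congr 2
  refine filter_congr fun m hm => ?_
  have := upCount_add_count_isDownAt (w := w) (Nat.lt_succ_iff.1 (mem_range.1 hm))
  omega

lemma nth_isDownAt_zero_le : nth (IsDownAt n w) 0 ≤ 2 * n :=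
  nth_zero (p := IsDownAt n w) ▸ Nat.sInf_le (isDownAt_of_le n w le_rfl)

lemma alpha_zero_eq_nth : alpha n w 0 = nth (IsDownAt n w) 0 := by
  rw [alpha_eq_card_filter_count, card_filter_count_eq_zero infinite_isDownAt nth_isDownAt_zero_le,
    Nat.add_sub_cancel]

lemma alpha_succ_eq_nth_sub {j : ℕ} (hj : nth (IsDownAt n w) (j + 1) ≤ 2 * n) :
    alpha n w (j + 1) = nth (IsDownAt n w) (j + 1) - nth (IsDownAt n w) j - 1 := by
  rw [alpha_eq_card_filter_count, card_filter_count_eq_succ infinite_isDownAt hj]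

end Paths

section DyckPaths

variable {n : ℕ} {w : Fin (2 * n) → Bool}

lemma IsDyckPath.one_le_nth_isDownAt_zero (hn : 1 ≤ n) (hw : IsDyckPath n w) :
    1 ≤ nth (IsDownAt n w) 0 := by
  have h1 := hw.1 1 (by omega)
  have h2 := upCount_add_count_isDownAt (w := w) (m := 1) (by omega)
  exact (count_eq_zero_iff_le_nth_zero infinite_isDownAt).1 (by omega)

lemma IsDyckPath.nth_isDownAt_one_le (hn : 1 ≤ n) (hw : IsDyckPath n w) :
    nth (IsDownAt n w) 1 ≤ 2 * n := by
  have hcount : count (IsDownAt n w) (2 * n + 1) = n + 1 := by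
    have := upCount_add_count_isDownAt (w := w) le_rfl
    rw [hw.2] at this
    rw [count_succ, if_pos (isDownAt_of_le n w le_rfl)]
    omega
  by_contra! h
  have := (count_le_iff_le_nth infinite_isDownAt (a := 2 * n + 1) (b := 1)).2 h
  omega

noncomputable def swapDownGaps (n : ℕ) (w : Fin (2 * n) → Bool) : Fin (2 * n) → Bool :=
  fun p => if (p : ℕ) < nth (IsDownAt n w) 1
    then decide ((p : ℕ) ≠ nth (IsDownAt n w) 1 - nth (IsDownAt n w) 0) else w p

lemma isDownAt_swapDownGaps_iff (hb : nth (IsDownAt n w) 1 ≤ 2 * n) {m : ℕ} :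
    IsDownAt n (swapDownGaps n w) m ↔
      if m < nth (IsDownAt n w) 1 then m = nth (IsDownAt n w) 1 - nth (IsDownAt n w) 0
      else IsDownAt n w m := by
  by_cases hm : m < 2 * n
  · by_cases hmb : m < nth (IsDownAt n w) 1 <;> simp [IsDownAt, stepAt, swapDownGaps, hm, hmb]
  · simp [IsDownAt, stepAt, hm, show ¬ m < nth (IsDownAt n w) 1 by omega]

variable (hn : 1 ≤ n) (hw : IsDyckPath n w)
include hn hw

lemma nth_isDownAt_swapDownGaps :
    nth (IsDownAt n (swapDownGaps n w)) 0 = nth (IsDownAt n w) 1 - nth (IsDownAt n w) 0 ∧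
      nth (IsDownAt n (swapDownGaps n w)) 1 = nth (IsDownAt n w) 1 := by
  have ha := hw.one_le_nth_isDownAt_zero hn
  have hb := hw.nth_isDownAt_one_le hn
  have hab := nth_isDownAt_zero_lt_one (w := w)
  refine nth_zero_eq_and_nth_one_eq ?_ ?_ (by omega) fun i hi => ?_
  · rw [isDownAt_swapDownGaps_iff hb, if_pos (by omega)]
  · rw [isDownAt_swapDownGaps_iff hb, if_neg (lt_irrefl _)]
    exact nth_mem_of_infinite infinite_isDownAt 1
  · rw [isDownAt_swapDownGaps_iff hb, if_pos hi]
    exact id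

lemma swapDownGaps_swapDownGaps : swapDownGaps n (swapDownGaps n w) = w := by
  have ha := hw.one_le_nth_isDownAt_zero hn
  have hb := hw.nth_isDownAt_one_le hn
  have hab := nth_isDownAt_zero_lt_one (w := w)
  obtain ⟨h0, h1⟩ := nth_isDownAt_swapDownGaps hn hw
  funext p
  by_cases hp : (p : ℕ) < nth (IsDownAt n w) 1
  · have hdown : IsDownAt n w p ↔ (p : ℕ) = nth (IsDownAt n w) 0 :=
      ⟨fun h => eq_nth_zero_of_lt_nth_one h hp,
        fun h => h ▸ nth_mem_of_infinite infinite_isDownAt 0⟩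
    simp only [IsDownAt, stepAt, p.isLt, dite_true, Fin.eta] at hdown
    rw [swapDownGaps, h0, h1, if_pos hp, show nth (IsDownAt n w) 1 -
      (nth (IsDownAt n w) 1 - nth (IsDownAt n w) 0) = nth (IsDownAt n w) 0 by omega]
    cases hwp : w p <;> simp_all
  · simp only [swapDownGaps, h1, if_neg hp]

lemma count_isDownAt_swapDownGaps {m : ℕ} (hm : nth (IsDownAt n w) 1 ≤ m) :
    count (IsDownAt n (swapDownGaps n w)) m = count (IsDownAt n w) m := by
  refine count_eq_count_of_forall_ge ?_ (fun i hi => ?_) hm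
  · conv_lhs => rw [← (nth_isDownAt_swapDownGaps hn hw).2]
    rw [count_nth_of_infinite infinite_isDownAt, count_nth_of_infinite infinite_isDownAt]
  · rw [isDownAt_swapDownGaps_iff (hw.nth_isDownAt_one_le hn), if_neg (by omega)]

lemma isDyckPath_swapDownGaps : IsDyckPath n (swapDownGaps n w) := by
  have hb := hw.nth_isDownAt_one_le hn
  obtain ⟨h0, h1⟩ := nth_isDownAt_swapDownGaps hn hw
  have hsum (m : ℕ) (hm : m ≤ 2 * n) := upCount_add_count_isDownAt (w := swapDownGaps n w) hm
  refine ⟨fun m hm => ?_, ?_⟩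
  · have := hsum m hm
    rcases le_or_gt (nth (IsDownAt n w) 1) m with hbm | hmb
    · have := count_isDownAt_swapDownGaps hn hw hbm
      have := upCount_add_count_isDownAt (w := w) hm
      have := hw.1 m hm
      omega
    · have hle : count (IsDownAt n (swapDownGaps n w)) m ≤ 1 :=
        (count_le_iff_le_nth infinite_isDownAt).2 (h1 ▸ hmb.le)
      have hpos : count (IsDownAt n (swapDownGaps n w)) m ≠ 0 → 1 < m := fun h => by
        rw [Ne, count_eq_zero_iff_le_nth_zero infinite_isDownAt, h0] at h
        have := nth_isDownAt_zero_lt_one (w := w)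
        omega
      omega
  · have := count_isDownAt_swapDownGaps hn hw hb
    have := upCount_add_count_isDownAt (w := w) le_rfl
    have := hsum _ le_rfl
    have := hw.2
    omega

lemma alpha_zero_eq_alpha_one_swapDownGaps_add_one :
    alpha n w 0 = alpha n (swapDownGaps n w) 1 + 1 := by
  obtain ⟨h0, h1⟩ := nth_isDownAt_swapDownGaps hn hw
  have ha := hw.one_le_nth_isDownAt_zero hn
  have hab := nth_isDownAt_zero_lt_one (w := w)
  rw [alpha_zero_eq_nth, alpha_succ_eq_nth_sub (h1 ▸ hw.nth_isDownAt_one_le hn), h0, h1]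
  omega

end DyckPaths

/-- for `n ≥ 1`, `𝓡_n^{(0)}(z) = z · 𝓡_n^{(1)}(z)`. -/
theorem calR_zero_eq_z_mul_calR_one (n : ℕ) (hn : 1 ≤ n) (z : ℝ) :
    calR n 0 z = z * calR n 1 z := by
  rw [calR, calR, mul_sum]
  have hswap {w} (hw : w ∈ dyckPaths n) : swapDownGaps n w ∈ dyckPaths n :=
    mem_dyckPaths.2 (isDyckPath_swapDownGaps hn (mem_dyckPaths.1 hw))
  have hinv {w} (hw : w ∈ dyckPaths n) : swapDownGaps n (swapDownGaps n w) = w :=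
    swapDownGaps_swapDownGaps hn (mem_dyckPaths.1 hw)
  refine sum_nbij' (swapDownGaps n) (swapDownGaps n) (fun _ => hswap) (fun _ => hswap)
    (fun _ => hinv) (fun _ => hinv) fun w hw => ?_
  rw [alpha_zero_eq_alpha_one_swapDownGaps_add_one hn (mem_dyckPaths.1 hw)]
  ring
end

section
/- For every integer n ≥ 1 and all real numbers y_0,…,y_{n−1} ≥ 0, P_n(y_0,…,y_{n−1}) = ∫_0^{y_0} dx_0 ∫_0^{y_1+x_0} dx_1 ∫_0^{y_2+x_1} dx_2 ⋯ ∫_0^{y_{n−1}+x_{n−2}} dx_{n−1}. -/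
/-- The iterated integral `∫_0^{y_i + c} dx_i ∫_0^{y_{i+1} + x_i} dx_{i+1} ⋯` with `k` remaining
integration variables, where `c` is the value of the previous integration variable. -/
noncomputable def nestedIntegral (y : ℕ → ℝ) : ℕ → ℕ → ℝ → ℝ
  | 0, _, _ => 1
  | k + 1, i, c => ∫ x in (0 : ℝ)..(y i + c), nestedIntegral y k (i + 1) x


/-! `α_j(π)` counts the up-steps of `π` between its `j`-th and `(j+1)`-st down-steps. Deleting
the first peak of a path in `𝒟_{k+1}` whose initial ascent has length `b + 1` gives a path in
`𝒟_k` with initial ascent `a ≥ b`, and this is a bijection onto pairs `(π, b)` with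
`b ≤ α_0(π)`. Under it the exponents become `b + 1, a - b, α_1(π), α_2(π), …`, so by the
binomial theorem `P_{k+1}(z_0, z_1, …) = ∫_0^{z_0} P_k(z_1 + x, z_2, …) dx`, and iterating this
unfolds `P_n` into the nested integral. -/

open Finset
open scoped Nat

lemma Finset.range_card_eq_of_isLowerSet {S : Finset ℕ} (hS : IsLowerSet (S : Set ℕ)) :
    range #S = S := by
  ext m
  rw [mem_range]
  constructor
  · intro hm
    by_contra hmS
    have hsub : S ⊆ range m := fun x hx =>
      mem_range.2 (lt_of_not_ge fun hmx => hmS (hS hmx hx))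
    exact absurd (card_le_card hsub) (by simpa using hm)
  · intro hm
    have hsub : range (m + 1) ⊆ S := fun x hx =>
      hS (Nat.lt_succ_iff.1 (mem_range.1 hx)) hm
    simpa using card_le_card hsub

-- Paths are handled as sequences `ℕ → Bool`, so that inserting and erasing steps does not
-- change the index type.
namespace BoolSeq

variable (W : ℕ → Bool)

def countTrue (m : ℕ) : ℕ := #{q ∈ range m | W q = true}

lemma countTrue_mono {m m' : ℕ} (h : m ≤ m') : countTrue W m ≤ countTrue W m' :=
  card_le_card (filter_subset_filter _ (range_subset_range.2 h))

@[simp] lemma countTrue_zero : countTrue W 0 = 0 := by simp [countTrue]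

lemma countTrue_succ (m : ℕ) : countTrue W (m + 1) = countTrue W m + (W m).toNat := by
  unfold countTrue
  rw [range_add_one, filter_insert]
  cases h : W m
  · simp
  · rw [if_pos rfl, card_insert_of_notMem (by simp)]
    rfl

lemma countTrue_eq_self_iff {m : ℕ} : countTrue W m = m ↔ ∀ q < m, W q = true := by
  conv_lhs => rhs; rw [← card_range m]
  rw [countTrue, card_filter_eq_iff]
  simp

def levelSet (N j : ℕ) : Finset ℕ := {m ∈ range (2 * N + 1) | countTrue W m + j = m}

def alpha (N j : ℕ) : ℕ := #(levelSet W N j) - 1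

lemma levelSet_zero_eq_range (N : ℕ) : levelSet W N 0 = range (alpha W N 0 + 1) := by
  have hlow : IsLowerSet (levelSet W N 0 : Set ℕ) := by
    intro m m' hm'm hm
    simp only [levelSet, coe_filter, mem_range, add_zero, countTrue_eq_self_iff,
      Set.mem_ofPred_eq] at hm ⊢
    exact ⟨by omega, fun q hq => hm.2 q (by omega)⟩
  have hzero : 0 ∈ levelSet W N 0 := by simp [levelSet]
  rw [alpha, Nat.sub_add_cancel (card_pos.2 ⟨0, hzero⟩), range_card_eq_of_isLowerSet hlow]

lemma le_alpha_zero_iff {N m : ℕ} (hm : m ≤ 2 * N) :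
    m ≤ alpha W N 0 ↔ ∀ q < m, W q = true := by
  have := congrArg (m ∈ ·) (levelSet_zero_eq_range W N)
  simp only [levelSet, mem_filter, mem_range, add_zero, countTrue_eq_self_iff, eq_iff_iff] at this
  rw [← Nat.lt_succ_iff, ← this]
  exact and_iff_right (by omega)

lemma alpha_zero_le_two_mul (N : ℕ) : alpha W N 0 ≤ 2 * N := by
  have : alpha W N 0 ∈ levelSet W N 0 := by simp [levelSet_zero_eq_range]
  simp only [levelSet, mem_filter, mem_range] at this
  omega

lemma countTrue_alpha_zero (N : ℕ) : countTrue W (alpha W N 0) = alpha W N 0 :=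
  (countTrue_eq_self_iff W).2 ((le_alpha_zero_iff W (alpha_zero_le_two_mul W N)).1 le_rfl)

def IsDyck (N : ℕ) : Prop :=
  (∀ m ≤ 2 * N, m ≤ 2 * countTrue W m) ∧ countTrue W (2 * N) = N

variable {W} {N : ℕ}

lemma IsDyck.alpha_zero_le (hW : IsDyck W N) : alpha W N 0 ≤ N := by
  have := countTrue_mono W (alpha_zero_le_two_mul W N)
  rwa [countTrue_alpha_zero, hW.2] at this

lemma IsDyck.one_le_alpha_zero (hW : IsDyck W (N + 1)) : 1 ≤ alpha W (N + 1) 0 := by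
  rw [le_alpha_zero_iff W (by omega)]
  intro q hq
  have := hW.1 1 (by omega)
  rw [countTrue_succ, countTrue_zero] at this
  cases h : W 0 <;> simp_all

lemma IsDyck.apply_alpha_zero (hW : IsDyck W (N + 1)) : W (alpha W (N + 1) 0) = false := by
  have hle := hW.alpha_zero_le
  by_contra h
  have : alpha W (N + 1) 0 + 1 ≤ alpha W (N + 1) 0 := by
    rw [le_alpha_zero_iff W (by omega)]
    intro q hq
    rcases Nat.lt_succ_iff_lt_or_eq.1 hq with hq | rfl
    · exact (le_alpha_zero_iff W (by omega)).1 le_rfl q hq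
    · simpa using h
  omega

-- When `W` begins with `b` up-steps, `insertPeak b W` inserts a peak right after them, and
-- `erasePeak b` undoes this.
def insertPeak (b : ℕ) (W : ℕ → Bool) : ℕ → Bool :=
  fun p => if p ≤ b then true else if p = b + 1 then false else W (p - 2)

def erasePeak (b : ℕ) (W : ℕ → Bool) : ℕ → Bool :=
  fun q => if q < b then true else W (q + 2)

variable {b : ℕ}

lemma countTrue_insertPeak_of_le {m : ℕ} (hm : m ≤ b + 1) : countTrue (insertPeak b W) m = m :=
  (countTrue_eq_self_iff _).2 fun q hq => if_pos (by omega)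

lemma countTrue_insertPeak_add_two (hb : ∀ q < b, W q = true) (d : ℕ) :
    countTrue (insertPeak b W) (b + 2 + d) = countTrue W (b + d) + 1 := by
  induction d with
  | zero =>
    rw [countTrue_succ, countTrue_insertPeak_of_le le_rfl, add_zero,
      (countTrue_eq_self_iff W).2 hb]
    simp [insertPeak]
  | succ d ih =>
    rw [← add_assoc, countTrue_succ, ih, ← add_assoc, countTrue_succ]
    have : insertPeak b W (b + 2 + d) = W (b + d) := by
      simp only [insertPeak]
      rw [if_neg (by omega), if_neg (by omega), show b + 2 + d - 2 = b + d by omega]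
    rw [this]
    ring

lemma IsDyck.insertPeak (hW : IsDyck W N) (hb : b ≤ alpha W N 0) :
    IsDyck (insertPeak b W) (N + 1) := by
  have hbN := hW.alpha_zero_le
  have hpre := (le_alpha_zero_iff W (by omega : b ≤ 2 * N)).1 hb
  refine ⟨fun m hm => ?_, ?_⟩
  · by_cases h : m ≤ b + 1
    · rw [countTrue_insertPeak_of_le h]; omega
    · obtain ⟨d, rfl⟩ := Nat.exists_eq_add_of_le (by omega : b + 2 ≤ m)
      have := hW.1 (b + d) (by omega)
      rw [countTrue_insertPeak_add_two hpre]
      omega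
  · rw [show 2 * (N + 1) = b + 2 + (2 * N - b) by omega, countTrue_insertPeak_add_two hpre,
      show b + (2 * N - b) = 2 * N by omega, hW.2]

lemma alpha_insertPeak_zero (hb : b ≤ 2 * N) : alpha (insertPeak b W) (N + 1) 0 = b + 1 := by
  have hle := alpha_zero_le_two_mul (insertPeak b W) (N + 1)
  apply le_antisymm
  · by_contra h
    have := (le_alpha_zero_iff _ hle).1 le_rfl (b + 1) (by omega)
    simp [insertPeak] at this
  · exact (le_alpha_zero_iff _ (by omega)).2 fun q hq => if_pos (by omega)

lemma levelSet_insertPeak_succ (hb : ∀ q < b, W q = true) (j : ℕ) :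
    levelSet (insertPeak b W) (N + 1) (j + 1) =
      ({m ∈ levelSet W N j | b ≤ m}).image (· + 2) := by
  ext m
  simp only [levelSet, mem_image, mem_filter, mem_range]
  constructor
  · rintro ⟨hm, hcount⟩
    have hbm : b + 2 ≤ m := by
      by_contra h
      rw [countTrue_insertPeak_of_le (by omega)] at hcount
      omega
    obtain ⟨d, rfl⟩ := Nat.exists_eq_add_of_le hbm
    rw [countTrue_insertPeak_add_two hb] at hcount
    exact ⟨b + d, ⟨⟨by omega, by omega⟩, by omega⟩, by omega⟩
  · rintro ⟨m', ⟨⟨hm', hcount⟩, hbm'⟩, rfl⟩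
    obtain ⟨d, rfl⟩ := Nat.exists_eq_add_of_le hbm'
    rw [show b + d + 2 = b + 2 + d by omega, countTrue_insertPeak_add_two hb]
    omega

lemma alpha_insertPeak_one (hb : b ≤ alpha W N 0) :
    alpha (insertPeak b W) (N + 1) 1 = alpha W N 0 - b := by
  have hpre := (le_alpha_zero_iff W (hb.trans (alpha_zero_le_two_mul W N))).1 hb
  have hIcc : {m ∈ levelSet W N 0 | b ≤ m} = Icc b (alpha W N 0) := by
    ext m
    simp only [levelSet_zero_eq_range, mem_filter, mem_range, mem_Icc]
    omega
  rw [alpha, levelSet_insertPeak_succ hpre 0, card_image_of_injective _ (add_left_injective 2),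
    hIcc, Nat.card_Icc]
  omega

lemma alpha_insertPeak_add_two (hb : b ≤ alpha W N 0) (j : ℕ) :
    alpha (insertPeak b W) (N + 1) (j + 2) = alpha W N (j + 1) := by
  have hpre := (le_alpha_zero_iff W (hb.trans (alpha_zero_le_two_mul W N))).1 hb
  rw [alpha, alpha, levelSet_insertPeak_succ hpre (j + 1),
    card_image_of_injective _ (add_left_injective 2), filter_true_of_mem]
  intro m hm
  simp only [levelSet, mem_filter, mem_range] at hm
  by_contra hmb
  have := (countTrue_eq_self_iff W (m := m)).2 fun q hq => hpre q (by omega)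
  omega

lemma erasePeak_insertPeak (hb : ∀ q < b, W q = true) : erasePeak b (insertPeak b W) = W := by
  funext q
  simp only [erasePeak, insertPeak]
  split_ifs with h <;> first | exact (hb q h).symm | omega | simp

lemma insertPeak_erasePeak (hb : ∀ q ≤ b, W q = true) (hb1 : W (b + 1) = false) :
    insertPeak b (erasePeak b W) = W := by
  funext p
  simp only [erasePeak, insertPeak]
  split_ifs with h h' h''
  · exact (hb p h).symm
  · exact h' ▸ hb1.symm
  · omega
  · rw [Nat.sub_add_cancel (by omega)]

lemma le_alpha_zero_erasePeak (hb : b ≤ 2 * N) : b ≤ alpha (erasePeak b W) N 0 :=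
  (le_alpha_zero_iff _ hb).2 fun _ hq => if_pos hq

lemma IsDyck.insertPeak_erasePeak (hW : IsDyck W (N + 1)) (hb : b + 1 = alpha W (N + 1) 0) :
    BoolSeq.insertPeak b (BoolSeq.erasePeak b W) = W := by
  refine BoolSeq.insertPeak_erasePeak (fun q hq => ?_) (hb ▸ hW.apply_alpha_zero)
  exact (le_alpha_zero_iff W (alpha_zero_le_two_mul W (N + 1))).1 le_rfl q (by omega)

lemma IsDyck.erasePeak (hW : IsDyck W (N + 1)) (hb : b + 1 = alpha W (N + 1) 0) :
    IsDyck (BoolSeq.erasePeak b W) N := by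
  have hbN := hW.alpha_zero_le
  have hpre : ∀ q < b, BoolSeq.erasePeak b W q = true := fun _ hq => if_pos hq
  have hcount (d : ℕ) :
      countTrue W (b + 2 + d) = countTrue (BoolSeq.erasePeak b W) (b + d) + 1 := by
    rw [← countTrue_insertPeak_add_two hpre, hW.insertPeak_erasePeak hb]
  refine ⟨fun m hm => ?_, ?_⟩
  · by_cases h : m ≤ b
    · rw [(countTrue_eq_self_iff _).2 fun q hq => hpre q (by omega)]; omega
    · obtain ⟨d, rfl⟩ := Nat.exists_eq_add_of_le (by omega : b ≤ m)
      have := hW.1 (b + 2 + d) (by omega)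
      rw [hcount] at this
      omega
  · have := hcount (2 * N - b)
    rw [show b + 2 + (2 * N - b) = 2 * (N + 1) by omega, hW.2,
      show b + (2 * N - b) = 2 * N by omega] at this
    omega

end BoolSeq

def extendPath {n : ℕ} (w : Fin (2 * n) → Bool) : ℕ → Bool :=
  fun q => if h : q < 2 * n then w ⟨q, h⟩ else false

lemma upCount_eq_countTrue (n : ℕ) (w : Fin (2 * n) → Bool) (m : ℕ) :
    upCount n w m = BoolSeq.countTrue (extendPath w) m := by
  refine card_bij (fun p _ => (p : ℕ)) ?_ (fun p _ p' _ h => Fin.ext h) ?_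
  · intro p hp
    simp_all [extendPath]
  · intro q hq
    rw [Finset.mem_filter, mem_range, extendPath] at hq
    split_ifs at hq with h
    · exact ⟨⟨q, h⟩, by simpa using hq, rfl⟩
    · simp at hq

lemma mem_dyckPaths_iff {n : ℕ} {w : Fin (2 * n) → Bool} :
    w ∈ dyckPaths n ↔ BoolSeq.IsDyck (extendPath w) n := by
  simp [dyckPaths, IsDyckPath, BoolSeq.IsDyck, upCount_eq_countTrue]

lemma alpha_eq_alpha_extendPath (n : ℕ) (w : Fin (2 * n) → Bool) (j : ℕ) :
    alpha n w j = BoolSeq.alpha (extendPath w) n j := by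
  simp only [alpha, BoolSeq.alpha, BoolSeq.levelSet, upCount_eq_countTrue]

section Peaks

variable {k b : ℕ}

def insertPeakPath (b : ℕ) (w : Fin (2 * k) → Bool) : Fin (2 * (k + 1)) → Bool :=
  fun p => BoolSeq.insertPeak b (extendPath w) p

def erasePeakPath (b : ℕ) (w : Fin (2 * (k + 1)) → Bool) : Fin (2 * k) → Bool :=
  fun q => BoolSeq.erasePeak b (extendPath w) q

lemma extendPath_insertPeakPath (w : Fin (2 * k) → Bool) (hb : b ≤ 2 * k) :
    extendPath (insertPeakPath b w) = BoolSeq.insertPeak b (extendPath w) := by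
  funext p
  by_cases hp : p < 2 * (k + 1)
  · simp [extendPath, insertPeakPath, hp]
  · simp only [extendPath, hp, dite_false, BoolSeq.insertPeak]
    rw [if_neg (by omega), if_neg (by omega), dif_neg (by omega)]

lemma extendPath_erasePeakPath (w : Fin (2 * (k + 1)) → Bool) (hb : b ≤ 2 * k) :
    extendPath (erasePeakPath b w) = BoolSeq.erasePeak b (extendPath w) := by
  funext q
  by_cases hq : q < 2 * k
  · simp [extendPath, erasePeakPath, hq]
  · simp only [extendPath, hq, dite_false, BoolSeq.erasePeak]
    rw [if_neg (by omega), dif_neg (by omega)]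

variable {w : Fin (2 * k) → Bool}

lemma le_two_mul_of_le_alpha_zero (hb : b ≤ alpha k w 0) : b ≤ 2 * k :=
  hb.trans ((alpha_eq_alpha_extendPath k w 0).trans_le (BoolSeq.alpha_zero_le_two_mul _ k))

lemma alpha_insertPeakPath_zero (hb : b ≤ alpha k w 0) :
    alpha (k + 1) (insertPeakPath b w) 0 = b + 1 := by
  rw [alpha_eq_alpha_extendPath, extendPath_insertPeakPath w (le_two_mul_of_le_alpha_zero hb),
    BoolSeq.alpha_insertPeak_zero (le_two_mul_of_le_alpha_zero hb)]

lemma alpha_insertPeakPath_one (hb : b ≤ alpha k w 0) :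
    alpha (k + 1) (insertPeakPath b w) 1 = alpha k w 0 - b := by
  rw [alpha_eq_alpha_extendPath, extendPath_insertPeakPath w (le_two_mul_of_le_alpha_zero hb),
    BoolSeq.alpha_insertPeak_one (alpha_eq_alpha_extendPath k w 0 ▸ hb),
    alpha_eq_alpha_extendPath]

lemma alpha_insertPeakPath_add_two (hb : b ≤ alpha k w 0) (j : ℕ) :
    alpha (k + 1) (insertPeakPath b w) (j + 2) = alpha k w (j + 1) := by
  rw [alpha_eq_alpha_extendPath, extendPath_insertPeakPath w (le_two_mul_of_le_alpha_zero hb),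
    BoolSeq.alpha_insertPeak_add_two (alpha_eq_alpha_extendPath k w 0 ▸ hb),
    alpha_eq_alpha_extendPath]

lemma insertPeakPath_mem_dyckPaths (hw : w ∈ dyckPaths k) (hb : b ≤ alpha k w 0) :
    insertPeakPath b w ∈ dyckPaths (k + 1) := by
  rw [mem_dyckPaths_iff, extendPath_insertPeakPath w (le_two_mul_of_le_alpha_zero hb)]
  exact (mem_dyckPaths_iff.1 hw).insertPeak (alpha_eq_alpha_extendPath k w 0 ▸ hb)

lemma erasePeakPath_insertPeakPath (hb : b ≤ alpha k w 0) :
    erasePeakPath b (insertPeakPath b w) = w := by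
  have hpre := (BoolSeq.le_alpha_zero_iff _ (le_two_mul_of_le_alpha_zero hb)).1
    (alpha_eq_alpha_extendPath k w 0 ▸ hb)
  funext q
  simp only [erasePeakPath, extendPath_insertPeakPath w (le_two_mul_of_le_alpha_zero hb),
    BoolSeq.erasePeak_insertPeak hpre, extendPath, q.isLt, dite_true]

variable {w' : Fin (2 * (k + 1)) → Bool}

lemma erasePeakPath_mem_dyckPaths (hw' : w' ∈ dyckPaths (k + 1)) :
    erasePeakPath (alpha (k + 1) w' 0 - 1) w' ∈ dyckPaths k := by
  rw [mem_dyckPaths_iff] at hw' ⊢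
  have h1 := hw'.one_le_alpha_zero
  have h2 := hw'.alpha_zero_le
  rw [alpha_eq_alpha_extendPath, extendPath_erasePeakPath w' (by omega)]
  exact hw'.erasePeak (by omega)

lemma alpha_zero_sub_one_le_alpha_erasePeakPath (hw' : w' ∈ dyckPaths (k + 1)) :
    alpha (k + 1) w' 0 - 1 ≤ alpha k (erasePeakPath (alpha (k + 1) w' 0 - 1) w') 0 := by
  have h2 := (mem_dyckPaths_iff.1 hw').alpha_zero_le
  rw [alpha_eq_alpha_extendPath, alpha_eq_alpha_extendPath, extendPath_erasePeakPath w' (by omega)]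
  exact BoolSeq.le_alpha_zero_erasePeak (by omega)

lemma insertPeakPath_erasePeakPath (hw' : w' ∈ dyckPaths (k + 1)) :
    insertPeakPath (alpha (k + 1) w' 0 - 1) (erasePeakPath (alpha (k + 1) w' 0 - 1) w') = w' := by
  rw [mem_dyckPaths_iff] at hw'
  have h1 := hw'.one_le_alpha_zero
  have h2 := hw'.alpha_zero_le
  rw [alpha_eq_alpha_extendPath]
  have key :=
    hw'.insertPeak_erasePeak (b := BoolSeq.alpha (extendPath w') (k + 1) 0 - 1) (by omega)
  rw [← extendPath_erasePeakPath w' (by omega)] at key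
  funext p
  exact (congrFun key p).trans (by simp [extendPath])

end Peaks

lemma sum_dyckPaths_succ {M : Type*} [AddCommMonoid M] (k : ℕ)
    (f : (Fin (2 * (k + 1)) → Bool) → M) :
    ∑ w' ∈ dyckPaths (k + 1), f w' =
      ∑ w ∈ dyckPaths k, ∑ b ∈ range (alpha k w 0 + 1), f (insertPeakPath b w) := by
  rw [sum_sigma']
  symm
  refine sum_bij' (fun σ _ => insertPeakPath σ.2 σ.1)
    (fun w' _ => ⟨erasePeakPath (alpha (k + 1) w' 0 - 1) w', alpha (k + 1) w' 0 - 1⟩)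
    ?_ ?_ ?_ ?_ (fun _ _ => rfl)
  · rintro ⟨w, b⟩ hσ
    exact insertPeakPath_mem_dyckPaths (mem_sigma.1 hσ).1
      (Nat.lt_succ_iff.1 (mem_range.1 (mem_sigma.1 hσ).2))
  · intro w' hw'
    exact mem_sigma.2 ⟨erasePeakPath_mem_dyckPaths hw',
      mem_range.2 (Nat.lt_succ_of_le (alpha_zero_sub_one_le_alpha_erasePeakPath hw'))⟩
  · rintro ⟨w, b⟩ hσ
    have hb : b ≤ alpha k w 0 := Nat.lt_succ_iff.1 (mem_range.1 (mem_sigma.1 hσ).2)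
    simp only [alpha_insertPeakPath_zero hb, Nat.add_sub_cancel, erasePeakPath_insertPeakPath hb]
  · intro w' hw'
    exact insertPeakPath_erasePeakPath hw'

lemma add_pow_div_factorial (u x : ℝ) (a : ℕ) :
    (u + x) ^ a / a ! = ∑ b ∈ range (a + 1), x ^ b / b ! * (u ^ (a - b) / (a - b)!) := by
  rw [add_comm, add_pow, sum_div]
  refine sum_congr rfl fun b hb => ?_
  rw [Nat.cast_choose ℝ (Nat.lt_succ_iff.1 (mem_range.1 hb))]
  field_simp

lemma integral_pow_div_factorial (t : ℝ) (b : ℕ) :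
    ∫ x in (0 : ℝ)..t, x ^ b / b ! = t ^ (b + 1) / (b + 1)! := by
  rw [intervalIntegral.integral_div, integral_pow, Nat.factorial_succ]
  push_cast
  field_simp
  ring

lemma integral_add_pow_div_factorial (t u : ℝ) (a : ℕ) :
    ∫ x in (0 : ℝ)..t, (u + x) ^ a / a ! =
      ∑ b ∈ range (a + 1), t ^ (b + 1) / (b + 1)! * (u ^ (a - b) / (a - b)!) := by
  simp_rw [add_pow_div_factorial]
  rw [intervalIntegral.integral_finsetSum fun b _ =>
    (by fun_prop : Continuous _).intervalIntegrable _ _]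
  simp_rw [intervalIntegral.integral_mul_const, integral_pow_div_factorial]

lemma alpha_eq_zero_of_le {n j : ℕ} {w : Fin (2 * n) → Bool} (hw : w ∈ dyckPaths n)
    (hj : n ≤ j) : alpha n w j = 0 := by
  have hd : IsDyckPath n w := by simpa [dyckPaths] using hw
  have hsub : {m ∈ range (2 * n + 1) | upCount n w m + j = m} ⊆ {2 * n} := by
    intro m hm
    rw [mem_filter, mem_range] at hm
    have := hd.1 m (by omega)
    rw [mem_singleton]
    omega
  have := card_le_card hsub
  rw [card_singleton] at this
  rw [alpha]
  omega

lemma Ppoly_eq_sum_prod_range {n m : ℕ} (hnm : n ≤ m) (z : ℕ → ℝ) :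
    Ppoly n z = ∑ w ∈ dyckPaths n, ∏ i ∈ range m, z i ^ alpha n w i / (alpha n w i)! :=
  sum_congr rfl fun w hw => prod_subset (range_subset_range.2 hnm) fun i _ hi => by
    rw [alpha_eq_zero_of_le hw (by simpa using hi)]
    simp

lemma Ppoly_zero (z : ℕ → ℝ) : Ppoly 0 z = 1 := by
  classical
  have : dyckPaths 0 = univ := eq_univ_of_forall fun w =>
    mem_filter.2 ⟨mem_univ w, fun m hm => by simp_all, by simp [upCount]⟩
  simp [Ppoly, this]

lemma Ppoly_succ_eq_sum (k : ℕ) (z : ℕ → ℝ) :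
    Ppoly (k + 1) z = ∑ w ∈ dyckPaths k, ∑ b ∈ range (alpha k w 0 + 1),
      z 0 ^ (b + 1) / (b + 1)! * (z 1 ^ (alpha k w 0 - b) / (alpha k w 0 - b)!) *
        ∏ i ∈ range k, z (i + 2) ^ alpha k w (i + 1) / (alpha k w (i + 1))! := by
  rw [Ppoly_eq_sum_prod_range (Nat.le_succ (k + 1)), sum_dyckPaths_succ]
  refine sum_congr rfl fun w _ => sum_congr rfl fun b hb => ?_
  have hb : b ≤ alpha k w 0 := Nat.lt_succ_iff.1 (mem_range.1 hb)
  rw [prod_range_succ', prod_range_succ', alpha_insertPeakPath_zero hb,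
    alpha_insertPeakPath_one hb]
  simp only [zero_add, alpha_insertPeakPath_add_two hb]
  ring

lemma Ppoly_shift_eq_sum (k : ℕ) (z : ℕ → ℝ) (x : ℝ) :
    Ppoly k (fun j => z (j + 1) + if j = 0 then x else 0) = ∑ w ∈ dyckPaths k,
      (z 1 + x) ^ alpha k w 0 / (alpha k w 0)! *
        ∏ i ∈ range k, z (i + 2) ^ alpha k w (i + 1) / (alpha k w (i + 1))! := by
  rw [Ppoly_eq_sum_prod_range (Nat.le_succ k)]
  refine sum_congr rfl fun w _ => ?_
  rw [prod_range_succ']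
  simp only [zero_add, Nat.add_one_ne_zero, if_false, add_zero, if_true]
  ring

lemma Ppoly_succ (k : ℕ) (z : ℕ → ℝ) :
    Ppoly (k + 1) z =
      ∫ x in (0 : ℝ)..z 0, Ppoly k (fun j => z (j + 1) + if j = 0 then x else 0) := by
  simp_rw [Ppoly_shift_eq_sum]
  rw [intervalIntegral.integral_finsetSum fun w _ =>
    (by fun_prop : Continuous _).intervalIntegrable _ _, Ppoly_succ_eq_sum]
  refine sum_congr rfl fun w _ => ?_
  rw [intervalIntegral.integral_mul_const, integral_add_pow_div_factorial, sum_mul]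

lemma nestedIntegral_eq_Ppoly (y : ℕ → ℝ) (k i : ℕ) (c : ℝ) :
    nestedIntegral y k i c = Ppoly k (fun j => y (i + j) + if j = 0 then c else 0) := by
  induction k generalizing i c with
  | zero => rw [Ppoly_zero, nestedIntegral]
  | succ k ih =>
    rw [nestedIntegral, Ppoly_succ]
    simp only [ih, add_zero, if_true, Nat.add_one_ne_zero, if_false, add_assoc, add_comm 1]

theorem Ppoly_eq_nestedIntegral_general (n : ℕ) (y : ℕ → ℝ) :
    Ppoly n y = nestedIntegral y n 0 0 := by
  simp [nestedIntegral_eq_Ppoly]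

/-- equation (15) of the paper: for `n ≥ 1` and `y_0, …, y_{n-1} ≥ 0`,
`P_n(y_0,…,y_{n-1}) = ∫_0^{y_0} dx_0 ∫_0^{y_1+x_0} dx_1 ⋯ ∫_0^{y_{n-1}+x_{n-2}} dx_{n-1}`
(the outermost integral corresponds to `c = 0`, so its upper limit is `y_0`). -/
theorem Ppoly_eq_nestedIntegral (n : ℕ) (hn : 1 ≤ n) (y : ℕ → ℝ) (hy : ∀ i < n, 0 ≤ y i) :
    Ppoly n y = nestedIntegral y n 0 0 :=
  Ppoly_eq_nestedIntegral_general n y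
end
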